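/- arXiv:1402.2775 — 9 statements merged into one kernel-verified Lean document; each statement's English description precedes it below -/
import Mathlib

section
/- Let X = (X_1, X_2, …) be a random element of the real Hilbert space ℓ² with ∑_{k=1}^∞ E(X_k²) < ∞ and law μ. Let Y = (Y_1, Y_2, …) be the residual sequence of X, with τ_k² = E(Y_k²) > 0 for all k ≥ 1. Assume Y is α-mixing with mixing coefficients {α_k} satisfying ∑_{k=1}^∞ α_k^{1−1/(2p)} < ∞ for some p ≥ 1, and sup_{k≥1} E[(Y_k/τ_k)^{2r}] < ∞ for some r > p. Then HD(x) = 0 for μ-almost every x ∈ ℓ². -/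
open MeasureTheory ProbabilityTheory ENNReal

/-- The half-space depth of `x` with respect to the probability measure `μ` on `ℓ²`:
`HD(x) = inf { P(⟨u, X − x⟩ ≥ 0) : u ∈ ℓ² }`. -/
noncomputable def halfSpaceDepth [MeasurableSpace (lp (fun _ : ℕ => ℝ) 2)]
    (μ : Measure (lp (fun _ : ℕ => ℝ) 2)) (x : lp (fun _ : ℕ => ℝ) 2) : ℝ≥0∞ :=
  ⨅ u : lp (fun _ : ℕ => ℝ) 2, μ {z | 0 ≤ inner (𝕜 := ℝ) u (z - x)}

/-!
The standardized residuals `W k = Y k / τ k` are orthonormal in `L²(μ)`, and each is an affine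
continuous function on `ℓ²`, so `W k z - W k x = ⟪d k, z - x⟫` for some `d k ∈ ℓ²`. Testing the
depth of `x` against `u = ∑_{k<n} W k x • d k` gives `⟪u, z - x⟫ = T z - R` with
`T = ∑_{k<n} W k x * W k` and `R = ∑_{k<n} (W k x)²`; orthonormality gives `E T² = R`, so by
Chebyshev `HD(x) ≤ 1 / R`. Hence `HD(x) = 0` as soon as `∑ (W k x)² = ∞`.

The event `{∑ W_k² < ∞}` lies in every tail σ-algebra of `Y`; letting the gap go to infinity in
the α-mixing inequality makes it independent of every past σ-algebra, hence of itself, so its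
probability is `0` or `1`. It cannot be `1`: since `r > 1`, the bound on `E |W_k|^(2r)` makes the
`W_k²` uniformly integrable, so `W_k² → 0` a.s. would force `E W_k² → 0`, whereas `E W_k² = 1`.
-/

open Filter Topology

lemma le_min_add_rpow_div_rpow {t K r : ℝ} (ht : 0 ≤ t) (hK : 0 < K) (hr : 1 ≤ r) :
    t ≤ min t K + t ^ r / K ^ (r - 1) := by
  rcases le_or_gt t K with htK | hKt
  · rw [min_eq_left htK]
    linarith [show 0 ≤ t ^ r / K ^ (r - 1) by positivity]
  · have ht0 : 0 < t := hK.trans hKt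
    have : t ^ r / t ^ (r - 1) ≤ t ^ r / K ^ (r - 1) :=
      div_le_div_of_nonneg_left (by positivity) (by positivity)
        (Real.rpow_le_rpow hK.le hKt.le (by linarith))
    rw [Real.rpow_sub_one ht0.ne', div_div_cancel₀ (by positivity)] at this
    linarith [min_le_right t K, show 0 ≤ min t K from le_min ht hK.le]

section

variable {Ω : Type*} {mΩ : MeasurableSpace Ω} {μ : Measure Ω}

lemma memLp_of_eq_sub_sum [IsFiniteMeasure μ] {X : ℕ → Ω → ℝ} {p : ℝ≥0∞}
    (hX : ∀ j, MemLp (X j) p μ) {f : Ω → ℝ} {k : ℕ} {c : ℝ} {β : ℕ → ℝ}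
    (hf : ∀ z, f z = X k z - c - ∑ j ∈ Finset.range k, β j * X j z) : MemLp f p μ := by
  rw [funext hf]
  exact ((hX k).sub (memLp_const c)).sub (memLp_finsetSum _ fun j _ => (hX j).const_mul (β j))

lemma integral_residual_mul_residual_eq_zero {X Y : ℕ → Ω → ℝ} {b : ℕ → ℝ} {β : ℕ → ℕ → ℝ}
    (hYdef : ∀ k z, Y k z = X k z - b k - ∑ j ∈ Finset.range k, β k j * X j z)
    (hY : ∀ k, Integrable (Y k) μ) (hYX : ∀ k j, Integrable (fun z => Y k z * X j z) μ)
    (hYmean : ∀ k, ∫ z, Y k z ∂μ = 0) (hYorth : ∀ k j, j < k → ∫ z, Y k z * X j z ∂μ = 0)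
    {j k : ℕ} (hjk : j < k) : ∫ z, Y k z * Y j z ∂μ = 0 := by
  have hYb : Integrable (fun z => Y k z * b j) μ := (hY k).mul_const _
  have hYXb : Integrable (fun z => Y k z * X j z - Y k z * b j) μ := (hYX k j).sub hYb
  have hYXi (i : ℕ) : Integrable (fun z => β j i * (Y k z * X i z)) μ := (hYX k i).const_mul _
  simp_rw [hYdef j, mul_sub, Finset.mul_sum, mul_left_comm (Y k _)]
  rw [integral_sub hYXb (integrable_finsetSum _ fun i _ => hYXi i), integral_sub (hYX k j) hYb,
    integral_finsetSum _ fun i _ => hYXi i, integral_mul_const, hYorth k j hjk, hYmean k,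
    Finset.sum_eq_zero fun i hi => by
      rw [integral_const_mul, hYorth k i ((Finset.mem_range.1 hi).trans hjk), mul_zero]]
  simp

lemma integral_div_mul_div_eq_ite {Y : ℕ → Ω → ℝ} {τ : ℕ → ℝ} (hτ0 : ∀ k, τ k ≠ 0)
    (hτ : ∀ k, ∫ z, Y k z ^ 2 ∂μ = τ k ^ 2)
    (horth : ∀ j k, j < k → ∫ z, Y k z * Y j z ∂μ = 0) (k j : ℕ) :
    ∫ z, Y k z / τ k * (Y j z / τ j) ∂μ = if k = j then 1 else 0 := by
  simp_rw [div_mul_div_comm]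
  rw [integral_div]
  rcases lt_trichotomy j k with hjk | rfl | hkj
  · rw [horth j k hjk, zero_div, if_neg hjk.ne']
  · simp_rw [← sq, hτ, if_true, div_self (pow_ne_zero 2 (hτ0 j))]
  · simp_rw [mul_comm (Y k _), horth k j hkj, zero_div, if_neg hkj.ne]

lemma integral_sq_sum_eq_sum_sq {W : ℕ → Ω → ℝ} (hW : ∀ k, MemLp (W k) 2 μ)
    (horth : ∀ k j, ∫ z, W k z * W j z ∂μ = if k = j then 1 else 0) (s : Finset ℕ) (c : ℕ → ℝ) :
    ∫ z, (∑ k ∈ s, c k * W k z) ^ 2 ∂μ = ∑ k ∈ s, c k ^ 2 := by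
  have hint (k j : ℕ) : Integrable (fun z => c k * c j * (W k z * W j z)) μ :=
    ((hW k).integrable_mul (hW j)).const_mul _
  have hexpand (z : Ω) : (∑ k ∈ s, c k * W k z) ^ 2
      = ∑ k ∈ s, ∑ j ∈ s, c k * c j * (W k z * W j z) := by
    rw [sq, Finset.sum_mul_sum]
    exact Finset.sum_congr rfl fun _ _ => Finset.sum_congr rfl fun _ _ => by ring
  simp_rw [hexpand]
  rw [integral_finsetSum _ fun k _ => integrable_finsetSum _ fun j _ => hint k j]
  refine Finset.sum_congr rfl fun k hk => ?_
  simp_rw [integral_finsetSum _ fun j _ => hint k j, integral_const_mul, horth, mul_ite, mul_one,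
    mul_zero, Finset.sum_ite_eq, if_pos hk, sq]

lemma meas_ge_le_ofReal_inv_of_integral_sq_eq [IsFiniteMeasure μ] {T : Ω → ℝ}
    (hT : MemLp T 2 μ) {R : ℝ} (hR : 0 < R) (hTR : ∫ z, T z ^ 2 ∂μ = R) :
    μ {z | R ≤ T z} ≤ ENNReal.ofReal R⁻¹ := by
  have hmarkov := mul_meas_ge_le_integral_of_nonneg (Eventually.of_forall fun z => sq_nonneg (T z))
    hT.integrable_sq (R ^ 2)
  rw [hTR] at hmarkov
  have hsub : {z | R ≤ T z} ⊆ {z | R ^ 2 ≤ T z ^ 2} := fun z hz =>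
    pow_le_pow_left₀ hR.le hz 2
  calc μ {z | R ≤ T z} ≤ μ {z | R ^ 2 ≤ T z ^ 2} := measure_mono hsub
    _ = ENNReal.ofReal (μ.real {z | R ^ 2 ≤ T z ^ 2}) :=
        (ofReal_measureReal (measure_ne_top _ _)).symm
    _ ≤ ENNReal.ofReal R⁻¹ := by
      refine ENNReal.ofReal_le_ofReal ?_
      rw [← one_div, le_div_iff₀ hR]
      nlinarith

lemma integral_le_integral_min_add_div_rpow {f : Ω → ℝ} (hf0 : ∀ z, 0 ≤ f z)
    (hf : Integrable f μ) {r : ℝ} (hr : 1 ≤ r) (hfr : Integrable (fun z => f z ^ r) μ)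
    {K : ℝ} (hK : 0 < K) :
    ∫ z, f z ∂μ ≤ ∫ z, min (f z) K ∂μ + (∫ z, f z ^ r ∂μ) / K ^ (r - 1) := by
  have hmin : Integrable (fun z => min (f z) K) μ :=
    hf.mono (hf.aestronglyMeasurable.inf aestronglyMeasurable_const) (ae_of_all _ fun z => by
      simp only [Real.norm_eq_abs, abs_of_nonneg (hf0 z), abs_of_nonneg (le_min (hf0 z) hK.le)]
      exact min_le_left _ _)
  rw [← integral_div, ← integral_add hmin (hfr.div_const _)]
  exact integral_mono hf (hmin.add (hfr.div_const _)) fun z =>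
    le_min_add_rpow_div_rpow (hf0 z) hK hr

lemma not_ae_tendsto_zero_of_integral_eq_one [IsFiniteMeasure μ] {f : ℕ → Ω → ℝ}
    (hf0 : ∀ k z, 0 ≤ f k z) (hf : ∀ k, Integrable (f k) μ) (hf1 : ∀ k, ∫ z, f k z ∂μ = 1)
    {r C : ℝ} (hr : 1 < r) (hfr : ∀ k, Integrable (fun z => f k z ^ r) μ)
    (hC : ∀ k, ∫ z, f k z ^ r ∂μ ≤ C) :
    ¬ ∀ᵐ z ∂μ, Tendsto (fun k => f k z) atTop (𝓝 0) := by
  intro hlim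
  obtain ⟨K, hK1, hKC⟩ : ∃ K : ℝ, 1 ≤ K ∧ 2 * C ≤ K ^ (r - 1) :=
    ((eventually_ge_atTop 1).and
      ((tendsto_rpow_atTop (by linarith)).eventually_ge_atTop (2 * C))).exists
  have hK : 0 < K := one_pos.trans_le hK1
  have hmin : Tendsto (fun k => ∫ z, min (f k z) K ∂μ) atTop (𝓝 0) := by
    have := tendsto_integral_of_dominated_convergence (F := fun k z => min (f k z) K)
      (f := fun _ => 0) (fun _ => K)
      (fun k => ((hf k).aestronglyMeasurable.inf aestronglyMeasurable_const))
      (integrable_const K)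
      (fun k => ae_of_all _ fun z => by
        simp only [Real.norm_eq_abs, abs_of_nonneg (le_min (hf0 k z) hK.le)]
        exact min_le_right _ _)
      (hlim.mono fun z hz => by
        simpa [min_eq_left hK.le] using hz.min (tendsto_const_nhds (x := K)))
    simpa using this
  obtain ⟨k, hk⟩ := (hmin.eventually_lt_const (by norm_num : (0 : ℝ) < 1 / 2)).exists
  have htail : (∫ z, f k z ^ r ∂μ) / K ^ (r - 1) ≤ 1 / 2 := by
    rw [div_le_iff₀ (by positivity)]
    linarith [hC k]
  have := integral_le_integral_min_add_div_rpow (hf0 k) (hf k) hr.le (hfr k) hK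
  linarith [hf1 k]

lemma measurableSet_summable_of_nonneg {m : MeasurableSpace Ω} {g : ℕ → Ω → ℝ}
    (hg0 : ∀ k z, 0 ≤ g k z) (n : ℕ) (hg : ∀ k, n ≤ k → Measurable (g k)) :
    MeasurableSet {z | Summable fun k => g k z} := by
  have hset : {z | Summable fun k => g k z}
      = ⋃ M : ℕ, ⋂ N : ℕ, {z | ∑ k ∈ Finset.range N, g (k + n) z ≤ M} := by
    ext z
    simp only [Set.mem_ofPred_eq, Set.mem_iUnion, Set.mem_iInter]
    rw [← summable_nat_add_iff n]
    constructor
    · intro hz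
      exact ⟨⌈∑' k, g (k + n) z⌉₊, fun N =>
        (hz.sum_le_tsum _ fun k _ => hg0 _ z).trans (Nat.le_ceil _)⟩
    · rintro ⟨M, hM⟩
      exact summable_of_sum_range_le (fun k => hg0 _ z) hM
  rw [hset]
  exact .iUnion fun M => .iInter fun N => measurableSet_le
    (Finset.measurable_sum _ fun k _ => hg (k + n) (Nat.le_add_left n k)) measurable_const

lemma measure_summable_sq_ne_one [IsProbabilityMeasure μ] {W : ℕ → Ω → ℝ}
    (hWm : ∀ k, Measurable (W k)) (hW : ∀ k, MemLp (W k) 2 μ) (hW1 : ∀ k, ∫ z, W k z ^ 2 ∂μ = 1)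
    {r C : ℝ} (hr : 1 < r) (hWr : ∀ k, Integrable (fun z => |W k z| ^ (2 * r)) μ)
    (hC : ∀ k, ∫ z, |W k z| ^ (2 * r) ∂μ ≤ C) :
    μ {z | Summable fun k => W k z ^ 2} ≠ 1 := by
  have hB : MeasurableSet {z | Summable fun k => W k z ^ 2} :=
    measurableSet_summable_of_nonneg (fun k z => sq_nonneg _) 0 fun k _ => (hWm k).pow_const 2
  have hpow (k : ℕ) : (fun z => (W k z ^ 2) ^ r) = fun z => |W k z| ^ (2 * r) := by
    ext z
    rw [← sq_abs, ← Real.rpow_natCast, ← Real.rpow_mul (abs_nonneg _), Nat.cast_ofNat]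
  intro h1
  refine not_ae_tendsto_zero_of_integral_eq_one (f := fun k z => W k z ^ 2)
    (fun k z => sq_nonneg _) (fun k => (hW k).integrable_sq) hW1 hr
    (fun k => hpow k ▸ hWr k) (fun k => hpow k ▸ hC k) ?_
  filter_upwards [(ae_iff_measure_eq hB.nullMeasurableSet).2 (by rw [h1, measure_univ])]
    with z hz using hz.tendsto_atTop_zero

lemma measure_eq_zero_or_one_of_forall_measure_inter_eq_mul [IsProbabilityMeasure μ]
    {F : ℕ → MeasurableSpace Ω} (hF : Monotone F) (hFle : ∀ n, F n ≤ mΩ) {B : Set Ω}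
    (hB : MeasurableSet[⨆ n, F n] B)
    (hindep : ∀ n A, MeasurableSet[F n] A → μ (A ∩ B) = μ A * μ B) :
    μ B = 0 ∨ μ B = 1 := by
  have hBm : MeasurableSet B := iSup_le hFle B hB
  have hFB (n : ℕ) : Indep (F n) (MeasurableSpace.generateFrom {B}) μ := by
    refine IndepSets.indep (hFle n) (MeasurableSpace.generateFrom_le (by simpa using hBm))
      (@MeasurableSpace.isPiSystem_measurableSet _ (F n)) (IsPiSystem.singleton B)
      (@MeasurableSpace.generateFrom_measurableSet _ (F n)).symm rfl ?_
    rw [IndepSets_iff]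
    rintro A _ hA rfl
    exact hindep n A hA
  have hsup := indep_iSup_of_directed_le hFB hFle
    (MeasurableSpace.generateFrom_le (by simpa using hBm)) hF.directed_le
  exact measure_eq_zero_or_one_of_indepSet_self
    (hsup.indepSet_of_measurableSet hB (MeasurableSpace.measurableSet_generateFrom rfl))

lemma measure_inter_eq_mul_of_abs_sub_le [IsFiniteMeasure μ] {a : ℕ → ℝ}
    (ha : Tendsto a atTop (𝓝 0)) {A B : Set Ω}
    (h : ∀ k, |(μ (A ∩ B)).toReal - (μ A).toReal * (μ B).toReal| ≤ a k) :
    μ (A ∩ B) = μ A * μ B := by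
  have h0 : |(μ (A ∩ B)).toReal - (μ A).toReal * (μ B).toReal| ≤ 0 := ge_of_tendsto' ha h
  rw [← ENNReal.toReal_eq_toReal_iff' (measure_ne_top μ _)
    (ENNReal.mul_ne_top (measure_ne_top μ _) (measure_ne_top μ _)), ENNReal.toReal_mul]
  exact sub_eq_zero.1 (abs_nonpos_iff.1 h0)

lemma measure_eq_zero_or_one_of_alpha_mixing [IsProbabilityMeasure μ] {Y : ℕ → Ω → ℝ}
    (hY : ∀ i, Measurable (Y i)) {a : ℕ → ℝ}
    (hmix : ∀ n k : ℕ, ∀ A B : Set Ω,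
      MeasurableSet[⨆ i ∈ Finset.Iic n, MeasurableSpace.comap (Y i) (borel ℝ)] A →
      MeasurableSet[⨆ (i : ℕ) (_ : n + k ≤ i), MeasurableSpace.comap (Y i) (borel ℝ)] B →
      |(μ (A ∩ B)).toReal - (μ A).toReal * (μ B).toReal| ≤ a k)
    (hmix0 : Tendsto a atTop (𝓝 0)) {B : Set Ω}
    (hB : ∀ m, MeasurableSet[⨆ (i : ℕ) (_ : m ≤ i), MeasurableSpace.comap (Y i) (borel ℝ)] B) :
    μ B = 0 ∨ μ B = 1 := by
  refine measure_eq_zero_or_one_of_forall_measure_inter_eq_mul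
    (F := fun n => ⨆ i ∈ Finset.Iic n, MeasurableSpace.comap (Y i) (borel ℝ))
    (fun n m hnm => biSup_mono fun i hi => Finset.mem_Iic.2 ((Finset.mem_Iic.1 hi).trans hnm))
    (fun n => iSup₂_le fun i _ => (hY i).comap_le) ?_
    fun n A hA => measure_inter_eq_mul_of_abs_sub_le hmix0 fun k => hmix n k A B hA (hB (n + k))
  have hle : (⨆ (i : ℕ) (_ : 0 ≤ i), MeasurableSpace.comap (Y i) (borel ℝ))
      ≤ ⨆ n, ⨆ i ∈ Finset.Iic n, MeasurableSpace.comap (Y i) (borel ℝ) :=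
    iSup₂_le fun i _ => le_iSup_of_le i (le_iSup₂_of_le i (Finset.mem_Iic.2 le_rfl) le_rfl)
  exact hle B (hB 0)

end

lemma continuous_of_sub_eq_inner {E : Type*} [NormedAddCommGroup E] [InnerProductSpace ℝ E]
    {f : E → ℝ} {v : E} (hf : ∀ z x, f z - f x = inner ℝ v (z - x)) : Continuous f := by
  have hf' : f = fun z => f 0 + inner ℝ v z := funext fun z => by
    have := hf z 0
    rw [sub_zero] at this
    linarith
  rw [hf']
  fun_prop

local notation "ℓ²" => lp (fun _ : ℕ => ℝ) 2

lemma exists_inner_eq_sub_of_eq_sub_sum {f : ℓ² → ℝ} {k : ℕ} {c : ℝ} {β : ℕ → ℝ}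
    (hf : ∀ z, f z = z k - c - ∑ j ∈ Finset.range k, β j * z j) :
    ∃ v : ℓ², ∀ z x, f z - f x = inner ℝ v (z - x) := by
  have hsingle (j : ℕ) (w : ℓ²) : inner ℝ (lp.single 2 j (1 : ℝ)) w = w j := by
    simp [lp.inner_single_left]
  refine ⟨lp.single 2 k 1 - ∑ j ∈ Finset.range k, β j • lp.single 2 j 1, fun z x => ?_⟩
  simp only [inner_sub_left, sum_inner, real_inner_smul_left, hsingle, hf, lp.coeFn_sub,
    Pi.sub_apply, mul_sub, Finset.sum_sub_distrib]
  ring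

section

variable [MeasurableSpace ℓ²] {μ : Measure ℓ²} [IsFiniteMeasure μ] {W : ℕ → ℓ² → ℝ}
  {d : ℕ → ℓ²}

lemma halfSpaceDepth_le_ofReal_inv (hW : ∀ k, MemLp (W k) 2 μ)
    (horth : ∀ k j, ∫ z, W k z * W j z ∂μ = if k = j then 1 else 0)
    (hd : ∀ k z x, W k z - W k x = inner ℝ (d k) (z - x)) (x : ℓ²) (n : ℕ)
    (hR : 0 < ∑ k ∈ Finset.range n, W k x ^ 2) :
    halfSpaceDepth μ x ≤ ENNReal.ofReal (∑ k ∈ Finset.range n, W k x ^ 2)⁻¹ := by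
  set R := ∑ k ∈ Finset.range n, W k x ^ 2
  set T : ℓ² → ℝ := fun z => ∑ k ∈ Finset.range n, W k x * W k z
  have hinner (z : ℓ²) :
      inner ℝ (∑ k ∈ Finset.range n, W k x • d k) (z - x) = T z - R := by
    simp only [sum_inner, real_inner_smul_left, ← hd, T, R, mul_sub, Finset.sum_sub_distrib, sq]
  have hT : MemLp T 2 μ := memLp_finsetSum _ fun k _ => (hW k).const_mul _
  calc halfSpaceDepth μ x ≤ μ {z | 0 ≤ inner ℝ (∑ k ∈ Finset.range n, W k x • d k) (z - x)} :=
        iInf_le _ _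
    _ = μ {z | R ≤ T z} := by simp_rw [hinner, sub_nonneg]
    _ ≤ ENNReal.ofReal R⁻¹ :=
        meas_ge_le_ofReal_inv_of_integral_sq_eq hT hR (integral_sq_sum_eq_sum_sq hW horth _ _)

lemma halfSpaceDepth_eq_zero_of_not_summable (hW : ∀ k, MemLp (W k) 2 μ)
    (horth : ∀ k j, ∫ z, W k z * W j z ∂μ = if k = j then 1 else 0)
    (hd : ∀ k z x, W k z - W k x = inner ℝ (d k) (z - x)) {x : ℓ²}
    (hx : ¬ Summable fun k => W k x ^ 2) : halfSpaceDepth μ x = 0 := by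
  have hR : Tendsto (fun n => ∑ k ∈ Finset.range n, W k x ^ 2) atTop atTop :=
    (not_summable_iff_tendsto_nat_atTop_of_nonneg fun k => sq_nonneg _).1 hx
  have hbound :
      Tendsto (fun n => ENNReal.ofReal (∑ k ∈ Finset.range n, W k x ^ 2)⁻¹) atTop (𝓝 0) := by
    simpa using ENNReal.tendsto_ofReal hR.inv_tendsto_atTop
  refine nonpos_iff_eq_zero.1 (ge_of_tendsto hbound ?_)
  filter_upwards [hR.eventually_gt_atTop 0] with n hn
  exact halfSpaceDepth_le_ofReal_inv hW horth hd x n hn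

end

theorem halfSpaceDepth_ae_eq_zero_general
    [MeasurableSpace (lp (fun _ : ℕ => ℝ) 2)] [BorelSpace (lp (fun _ : ℕ => ℝ) 2)]
    (μ : Measure (lp (fun _ : ℕ => ℝ) 2)) [IsProbabilityMeasure μ]
    -- the coordinates of `X` have finite, summable second moments
    (hX2 : ∀ k : ℕ, Integrable (fun z : lp (fun _ : ℕ => ℝ) 2 => (z k) ^ 2) μ)
    -- `Y` is the residual sequence of `X`: `Y_k = X_k - (best affine predictor from X_0,…,X_{k-1})`,
    -- characterized by `Y_k` having zero mean and being orthogonal to `X_j`, `j < k`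
    (Y : ℕ → lp (fun _ : ℕ => ℝ) 2 → ℝ) (b : ℕ → ℝ) (β : ℕ → ℕ → ℝ)
    (hYdef : ∀ k z, Y k z = z k - b k - ∑ j ∈ Finset.range k, β k j * z j)
    (hYmean : ∀ k, ∫ z, Y k z ∂μ = 0)
    (hYorth : ∀ k j, j < k → ∫ z, Y k z * z j ∂μ = 0)
    -- the residual variances `τ_k² = E(Y_k²)` are positive
    (τ : ℕ → ℝ) (hτpos : ∀ k, 0 < τ k)
    (hτ : ∀ k, ∫ z, (Y k z) ^ 2 ∂μ = τ k ^ 2)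
    -- `Y` is α-mixing with mixing coefficients `a`
    (a : ℕ → ℝ)
    (hmix : ∀ n k : ℕ, ∀ A B : Set (lp (fun _ : ℕ => ℝ) 2),
      MeasurableSet[⨆ i ∈ Finset.Iic n, MeasurableSpace.comap (Y i) (borel ℝ)] A →
      MeasurableSet[⨆ (i : ℕ) (_ : n + k ≤ i), MeasurableSpace.comap (Y i) (borel ℝ)] B →
      |(μ (A ∩ B)).toReal - (μ A).toReal * (μ B).toReal| ≤ a k)
    (hmix0 : Filter.Tendsto a Filter.atTop (nhds 0))
    -- `∑ a_k^(1-1/2p) < ∞` for some `p ≥ 1`, and `sup_k E[(Y_k/τ_k)^(2r)] < ∞` for some `r > p`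
    (p r : ℝ) (hp : 1 ≤ p) (hpr : p < r)
    (hmomInt : ∀ k, Integrable (fun z => |Y k z / τ k| ^ (2 * r)) μ)
    (hmom : ∃ C : ℝ, ∀ k, ∫ z, |Y k z / τ k| ^ (2 * r) ∂μ ≤ C) :
    ∀ᵐ x ∂μ, halfSpaceDepth μ x = 0 := by
  obtain ⟨C, hC⟩ := hmom
  have hX (k : ℕ) : MemLp (fun z : ℓ² => z k) 2 μ := by
    refine (memLp_two_iff_integrable_sq ?_).2 (hX2 k)
    exact ((continuous_apply k).comp lp.uniformContinuous_coe.continuous).aestronglyMeasurable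
  have hY (k : ℕ) : MemLp (Y k) 2 μ := memLp_of_eq_sub_sum hX (hYdef k)
  choose v hv using fun k => exists_inner_eq_sub_of_eq_sub_sum (hYdef k)
  have hYmeas (k : ℕ) : Measurable (Y k) := (continuous_of_sub_eq_inner (hv k)).measurable
  set W : ℕ → ℓ² → ℝ := fun k z => Y k z / τ k
  have hW (k : ℕ) : MemLp (W k) 2 μ := by
    simpa [W, div_eq_mul_inv] using (hY k).mul_const (τ k)⁻¹
  have hWorth := integral_div_mul_div_eq_ite (fun k => (hτpos k).ne') hτ fun j k hjk =>
    integral_residual_mul_residual_eq_zero hYdef (fun k => (hY k).integrable one_le_two)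
      (fun k j => (hY k).integrable_mul (hX j)) hYmean hYorth hjk
  have hB01 := measure_eq_zero_or_one_of_alpha_mixing hYmeas hmix hmix0
    (B := {z | Summable fun k => W k z ^ 2}) fun m =>
      measurableSet_summable_of_nonneg (fun k z => sq_nonneg _) m fun k hk =>
        (((comap_measurable (Y k)).mono (le_iSup₂_of_le k hk le_rfl) le_rfl).div_const _).pow_const
          2
  have hB1 := measure_summable_sq_ne_one (fun k => (hYmeas k).div_const _) hW
    (fun k => by simpa [sq] using hWorth k k) (hp.trans_lt hpr) hmomInt hC
  have hd (k : ℕ) (z x : ℓ²) : W k z - W k x = inner ℝ ((τ k)⁻¹ • v k) (z - x) := by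
    rw [real_inner_smul_left, ← hv, div_sub_div_same, div_eq_inv_mul]
  filter_upwards [measure_eq_zero_iff_ae_notMem.1 (hB01.resolve_right hB1)] with x hx
  exact halfSpaceDepth_eq_zero_of_not_summable hW hWorth hd hx

/-- Theorem 2.1 (half-space depth part): if the residual sequence `Y` of a random element `X`
of `ℓ²` (with summable coordinate second moments) is `α`-mixing with
`∑ α_k ^ (1 − 1/(2p)) < ∞` for some `p ≥ 1`, all residual variances `τ_k²` are positive, and
`sup_k E[(Y_k/τ_k)^(2r)] < ∞` for some `r > p`, then `HD(x) = 0` for `μ`-a.e. `x`. -/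
theorem halfSpaceDepth_ae_eq_zero
    [MeasurableSpace (lp (fun _ : ℕ => ℝ) 2)] [BorelSpace (lp (fun _ : ℕ => ℝ) 2)]
    (μ : Measure (lp (fun _ : ℕ => ℝ) 2)) [IsProbabilityMeasure μ]
    -- the coordinates of `X` have finite, summable second moments
    (hX2 : ∀ k : ℕ, Integrable (fun z : lp (fun _ : ℕ => ℝ) 2 => (z k) ^ 2) μ)
    (hXsum : Summable fun k : ℕ => ∫ z : lp (fun _ : ℕ => ℝ) 2, (z k) ^ 2 ∂μ)
    -- `Y` is the residual sequence of `X`: `Y_k = X_k - (best affine predictor from X_0,…,X_{k-1})`,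
    -- characterized by `Y_k` having zero mean and being orthogonal to `X_j`, `j < k`
    (Y : ℕ → lp (fun _ : ℕ => ℝ) 2 → ℝ) (b : ℕ → ℝ) (β : ℕ → ℕ → ℝ)
    (hYdef : ∀ k z, Y k z = z k - b k - ∑ j ∈ Finset.range k, β k j * z j)
    (hYmean : ∀ k, ∫ z, Y k z ∂μ = 0)
    (hYorth : ∀ k j, j < k → ∫ z, Y k z * z j ∂μ = 0)
    -- the residual variances `τ_k² = E(Y_k²)` are positive
    (τ : ℕ → ℝ) (hτpos : ∀ k, 0 < τ k)
    (hτ : ∀ k, ∫ z, (Y k z) ^ 2 ∂μ = τ k ^ 2)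
    -- `Y` is α-mixing with mixing coefficients `a`
    (a : ℕ → ℝ) (ha0 : ∀ k, 0 ≤ a k)
    (hmix : ∀ n k : ℕ, ∀ A B : Set (lp (fun _ : ℕ => ℝ) 2),
      MeasurableSet[⨆ i ∈ Finset.Iic n, MeasurableSpace.comap (Y i) (borel ℝ)] A →
      MeasurableSet[⨆ (i : ℕ) (_ : n + k ≤ i), MeasurableSpace.comap (Y i) (borel ℝ)] B →
      |(μ (A ∩ B)).toReal - (μ A).toReal * (μ B).toReal| ≤ a k)
    (hmix0 : Filter.Tendsto a Filter.atTop (nhds 0))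
    -- `∑ a_k^(1-1/2p) < ∞` for some `p ≥ 1`, and `sup_k E[(Y_k/τ_k)^(2r)] < ∞` for some `r > p`
    (p r : ℝ) (hp : 1 ≤ p) (hpr : p < r)
    (hasum : Summable fun k => a k ^ (1 - 1 / (2 * p)))
    (hmomInt : ∀ k, Integrable (fun z => |Y k z / τ k| ^ (2 * r)) μ)
    (hmom : ∃ C : ℝ, ∀ k, ∫ z, |Y k z / τ k| ^ (2 * r) ∂μ ≤ C) :
    ∀ᵐ x ∂μ, halfSpaceDepth μ x = 0 :=
  halfSpaceDepth_ae_eq_zero_general μ hX2 Y b β hYdef hYmean hYorth τ hτpos hτ a hmix hmix0 p r hp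
    hpr hmomInt hmom
end

section
/- Let Y = (Y_1, Y_2, …) be a random element of the real Hilbert space ℓ² whose coordinates have zero means, are pairwise uncorrelated, and have variances τ_k² = E(Y_k²) ∈ (0, ∞). Then for every y = (y_1, y_2, …) ∈ ℓ² and every d ≥ 1 with ∑_{k=1}^d y_k²/τ_k² > 0, the half-space depth of y with respect to the law of Y satisfies HD(y) ≤ (∑_{k=1}^d y_k²/τ_k²)^{-1}. -/
open MeasureTheory ENNReal

/-!
Test the depth of `y` against the direction `u = ∑_{k<d} (y_k / τ_k²) e_k`. Then `⟨u, y⟩ = S`, where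
`S = ∑_{k<d} y_k² / τ_k²`, and since the coordinates are uncorrelated, `E ⟨u, Y⟩² = S` as well.
The half-space `{⟨u, Y − y⟩ ≥ 0}` is contained in `{⟨u, Y⟩² ≥ S²}`, whose probability is at most
`E ⟨u, Y⟩² / S² = S⁻¹` by Markov's inequality.
-/

open scoped InnerProductSpace

theorem measure_inner_sub_nonneg_le {E : Type*} [NormedAddCommGroup E] [InnerProductSpace ℝ E]
    [MeasurableSpace E] (μ : Measure E) [IsFiniteMeasure μ] (u y : E) (hy : 0 < ⟪u, y⟫_ℝ)
    (hint : Integrable (fun z => ⟪u, z⟫_ℝ ^ 2) μ) :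
    μ {z | 0 ≤ ⟪u, z - y⟫_ℝ} ≤ ENNReal.ofReal ((∫ z, ⟪u, z⟫_ℝ ^ 2 ∂μ) / ⟪u, y⟫_ℝ ^ 2) := by
  have hsub : {z | 0 ≤ ⟪u, z - y⟫_ℝ} ⊆ {z | ⟪u, y⟫_ℝ ^ 2 ≤ ⟪u, z⟫_ℝ ^ 2} := fun z hz => by
    rw [Set.mem_ofPred_eq, inner_sub_right, sub_nonneg] at hz
    exact pow_le_pow_left₀ hy.le hz 2
  have hmarkov := mul_meas_ge_le_integral_of_nonneg
    (ae_of_all μ fun z => sq_nonneg ⟪u, z⟫_ℝ) hint (⟪u, y⟫_ℝ ^ 2)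
  calc μ {z | 0 ≤ ⟪u, z - y⟫_ℝ}
      ≤ μ {z | ⟪u, y⟫_ℝ ^ 2 ≤ ⟪u, z⟫_ℝ ^ 2} := measure_mono hsub
    _ = ENNReal.ofReal (μ.real {z | ⟪u, y⟫_ℝ ^ 2 ≤ ⟪u, z⟫_ℝ ^ 2}) :=
      (ofReal_measureReal (measure_ne_top _ _)).symm
    _ ≤ _ := ENNReal.ofReal_le_ofReal <| by rwa [le_div_iff₀' (by positivity)]

theorem sq_sum_mul_eq_sum_sum {Ω ι : Type*} {X : ι → Ω → ℝ} (s : Finset ι) (c : ι → ℝ) (ω : Ω) :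
    (∑ k ∈ s, c k * X k ω) ^ 2 = ∑ k ∈ s, ∑ l ∈ s, c k * c l * (X k ω * X l ω) := by
  rw [sq, Finset.sum_mul_sum]
  exact Finset.sum_congr rfl fun k _ => Finset.sum_congr rfl fun l _ => by ring

section Uncorrelated

variable {Ω ι : Type*} [MeasurableSpace Ω] {μ : Measure Ω} {X : ι → Ω → ℝ}

theorem integrable_sq_sum_mul (s : Finset ι) (c : ι → ℝ)
    (hint : ∀ k ∈ s, ∀ l ∈ s, Integrable (fun ω => X k ω * X l ω) μ) :
    Integrable (fun ω => (∑ k ∈ s, c k * X k ω) ^ 2) μ := by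
  simp_rw [sq_sum_mul_eq_sum_sum]
  exact integrable_finsetSum _ fun k hk =>
    integrable_finsetSum _ fun l hl => (hint k hk l hl).const_mul _

theorem integral_sq_sum_mul_of_uncorrelated (s : Finset ι) (c : ι → ℝ)
    (hint : ∀ k ∈ s, ∀ l ∈ s, Integrable (fun ω => X k ω * X l ω) μ)
    (huncorr : ∀ k ∈ s, ∀ l ∈ s, k ≠ l → ∫ ω, X k ω * X l ω ∂μ = 0) :
    ∫ ω, (∑ k ∈ s, c k * X k ω) ^ 2 ∂μ = ∑ k ∈ s, c k ^ 2 * ∫ ω, X k ω ^ 2 ∂μ := by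
  classical
  simp_rw [sq_sum_mul_eq_sum_sum]
  rw [integral_finsetSum _ fun k hk =>
    integrable_finsetSum _ fun l hl => (hint k hk l hl).const_mul _]
  refine Finset.sum_congr rfl fun k hk => ?_
  rw [integral_finsetSum _ fun l hl => (hint k hk l hl).const_mul _,
    Finset.sum_eq_single_of_mem k hk fun l hl hlk => by
      rw [integral_const_mul, huncorr k hk l hl hlk.symm, mul_zero]]
  simp only [integral_const_mul, ← sq]

end Uncorrelated

theorem lp.inner_sum_single_left {ι : Type*} [DecidableEq ι] (s : Finset ι) (c : ι → ℝ)
    (w : lp (fun _ : ι => ℝ) 2) :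
    ⟪∑ k ∈ s, (lp.single 2 k (c k) : lp (fun _ : ι => ℝ) 2), w⟫_ℝ = ∑ k ∈ s, c k * w k := by
  simp [sum_inner, lp.inner_single_left, mul_comm]

theorem halfSpaceDepth_le_general
    [MeasurableSpace (lp (fun _ : ℕ => ℝ) 2)]
    (μ : Measure (lp (fun _ : ℕ => ℝ) 2)) [IsProbabilityMeasure μ]
    (hint2 : ∀ k l : ℕ, Integrable (fun z : lp (fun _ : ℕ => ℝ) 2 => z k * z l) μ)
    (huncorr : ∀ k l : ℕ, k ≠ l → ∫ z, z k * z l ∂μ = 0)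
    (τ : ℕ → ℝ) (hτpos : ∀ k, 0 < τ k)
    (hτ : ∀ k, ∫ z, (z k) ^ 2 ∂μ = τ k ^ 2)
    (y : lp (fun _ : ℕ => ℝ) 2) (d : ℕ)
    (hpos : 0 < ∑ k ∈ Finset.range d, y k ^ 2 / τ k ^ 2) :
    halfSpaceDepth μ y ≤ ENNReal.ofReal ((∑ k ∈ Finset.range d, y k ^ 2 / τ k ^ 2)⁻¹) := by
  set S := ∑ k ∈ Finset.range d, y k ^ 2 / τ k ^ 2
  set u : lp (fun _ : ℕ => ℝ) 2 := ∑ k ∈ Finset.range d, lp.single 2 k (y k / τ k ^ 2)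
  have hu (w : lp (fun _ : ℕ => ℝ) 2) : ⟪u, w⟫_ℝ = ∑ k ∈ Finset.range d, y k / τ k ^ 2 * w k :=
    lp.inner_sum_single_left _ _ w
  have huy : ⟪u, y⟫_ℝ = S := by
    rw [hu]
    exact Finset.sum_congr rfl fun k _ => by ring
  have hmoment : ∫ z, ⟪u, z⟫_ℝ ^ 2 ∂μ = S := by
    simp_rw [hu]
    rw [integral_sq_sum_mul_of_uncorrelated _ _ (fun k _ l _ => hint2 k l)
      fun k _ l _ => huncorr k l]
    refine Finset.sum_congr rfl fun k _ => ?_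
    rw [hτ k]
    field_simp [(hτpos k).ne']
  have hint : Integrable (fun z => ⟪u, z⟫_ℝ ^ 2) μ := by
    simp_rw [hu]
    exact integrable_sq_sum_mul _ _ fun k _ l _ => hint2 k l
  calc halfSpaceDepth μ y ≤ μ {z | 0 ≤ ⟪u, z - y⟫_ℝ} := iInf_le _ u
    _ ≤ ENNReal.ofReal (S / S ^ 2) := by
      simpa only [hmoment, huy] using measure_inner_sub_nonneg_le μ u y (huy ▸ hpos) hint
    _ = ENNReal.ofReal S⁻¹ := by rw [sq, div_mul_cancel_left₀ hpos.ne']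

/-- If the coordinates of a random element `Y` of `ℓ²` (with law `μ`) have zero means, are
pairwise uncorrelated, and have variances `τ_k² ∈ (0,∞)`, then for every `y ∈ ℓ²` and every
`d ≥ 1` with `∑_{k<d} y_k²/τ_k² > 0`, we have `HD(y) ≤ (∑_{k<d} y_k²/τ_k²)⁻¹`. -/
theorem halfSpaceDepth_le
    [MeasurableSpace (lp (fun _ : ℕ => ℝ) 2)] [BorelSpace (lp (fun _ : ℕ => ℝ) 2)]
    (μ : Measure (lp (fun _ : ℕ => ℝ) 2)) [IsProbabilityMeasure μ]
    (hint1 : ∀ k : ℕ, Integrable (fun z : lp (fun _ : ℕ => ℝ) 2 => z k) μ)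
    (hint2 : ∀ k l : ℕ, Integrable (fun z : lp (fun _ : ℕ => ℝ) 2 => z k * z l) μ)
    (hmean : ∀ k : ℕ, ∫ z, z k ∂μ = 0)
    (huncorr : ∀ k l : ℕ, k ≠ l → ∫ z, z k * z l ∂μ = 0)
    (τ : ℕ → ℝ) (hτpos : ∀ k, 0 < τ k)
    (hτ : ∀ k, ∫ z, (z k) ^ 2 ∂μ = τ k ^ 2)
    (y : lp (fun _ : ℕ => ℝ) 2) (d : ℕ) (hd1 : 1 ≤ d)
    (hpos : 0 < ∑ k ∈ Finset.range d, y k ^ 2 / τ k ^ 2) :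
    halfSpaceDepth μ y ≤ ENNReal.ofReal ((∑ k ∈ Finset.range d, y k ^ 2 / τ k ^ 2)⁻¹) :=
  halfSpaceDepth_le_general μ hint2 huncorr τ hτpos hτ y d hpos
end

section
/- Fix an integer J ≥ 2. Let X = (X_1, X_2, …) be an α-mixing sequence of real random variables whose mixing coefficients {α_k} satisfy ∑_{k=1}^∞ α_k^{1−1/(2p)} < ∞ for some p ≥ 1, and such that the distribution of X_k is non-atomic for each k ≥ 1. Let μ denote the law of X on ℝ^ℕ. Then BD(x) = 0 and HRD(x) = 0 for μ-almost every x. -/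
open MeasureTheory ENNReal

/-- The band depth of a sequence `x` with respect to a probability measure `μ` on `ℝ^ℕ`,
with `J` independent copies: `BD(x) = ∑_{j=2}^J P(min_{1≤i≤j} X_{i,k} ≤ x_k ≤ max_{1≤i≤j} X_{i,k}
for all k)`, realized via the product measure `μ^{⊗ J}`. -/
noncomputable def bandDepthSeq (μ : Measure (ℕ → ℝ)) [IsProbabilityMeasure μ] (J : ℕ)
    (x : ℕ → ℝ) : ℝ≥0∞ :=
  ∑ j ∈ Finset.Icc 2 J, (Measure.pi fun _ : Fin J => μ)
    {ω | ∀ k : ℕ, (∃ i : Fin J, (i : ℕ) < j ∧ ω i k ≤ x k) ∧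
                  (∃ i : Fin J, (i : ℕ) < j ∧ x k ≤ ω i k)}

/-- The half-region depth of a sequence `x` with respect to a probability measure `μ` on `ℝ^ℕ`:
`HRD(x) = min { P(X_k ≤ x_k ∀ k), P(X_k ≥ x_k ∀ k) }`. -/
noncomputable def halfRegionDepthSeq (μ : Measure (ℕ → ℝ)) (x : ℕ → ℝ) : ℝ≥0∞ :=
  min (μ {z | ∀ k : ℕ, z k ≤ x k}) (μ {z | ∀ k : ℕ, x k ≤ z k})

/-!
At each coordinate `k` the events in question have probability at most some `r < 1`: for the
half-region depth, one of the half-lines `X_k ≤ x_k`, `X_k > x_k` has mass at most `1/2` for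
infinitely many `k`; for the band depth, `J` independent copies not all on one side of `x_k` have
probability at most `1 - 2⁻ᴶ`. Along `m` coordinates spaced `d` apart, α-mixing makes such events
nearly independent, so their intersection has probability at most `r ^ m + C_m α_d`; letting
`d → ∞` and then `m → ∞` shows it is null. For the `J` copies this near-independence is obtained
by splitting into the finitely many sign patterns of the copies, each a product of events of a
single copy. Non-atomicity only serves to discard ties `X_k = x_k`.
-/

open Filter Topology Set

lemma Finset.prod_le_prod_add_card_mul {ι : Type*} (s : Finset ι) {u c : ι → ℝ} {E : ℝ}
    (hE : 0 ≤ E) (hu0 : ∀ i ∈ s, 0 ≤ u i) (hu1 : ∀ i ∈ s, u i ≤ 1)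
    (hc0 : ∀ i ∈ s, 0 ≤ c i) (hc1 : ∀ i ∈ s, c i ≤ 1) (h : ∀ i ∈ s, u i ≤ c i + E) :
    ∏ i ∈ s, u i ≤ ∏ i ∈ s, c i + s.card * E := by
  classical
  induction s using Finset.induction_on with
  | empty => simp
  | insert i s hi ih =>
    simp only [Finset.forall_mem_insert] at hu0 hu1 hc0 hc1 h
    have ih := ih hu0.2 hu1.2 hc0.2 hc1.2 h.2
    have hpc0 : 0 ≤ ∏ j ∈ s, c j := Finset.prod_nonneg hc0.2
    have hpc1 : ∏ j ∈ s, c j ≤ 1 := Finset.prod_le_one hc0.2 hc1.2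
    have hsE : 0 ≤ (s.card : ℝ) * E := by positivity
    rw [Finset.prod_insert hi, Finset.prod_insert hi, Finset.card_insert_of_notMem hi]
    push_cast
    nlinarith [mul_le_mul_of_nonneg_left ih hu0.1]

lemma Set.Infinite.exists_seq_add_le {G : Set ℕ} (hG : G.Infinite) (d : ℕ) :
    ∃ k : ℕ → ℕ, (∀ t, k t ∈ G) ∧ ∀ s t, s < t → k s + d ≤ k t := by
  choose f hfG hf using hG.exists_gt
  let k : ℕ → ℕ := fun t => Nat.rec (f 0) (fun _ prev => f (prev + d)) t
  have hstep : ∀ t, k t + d < k (t + 1) := fun t => hf _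
  refine ⟨k, fun t => by cases t <;> exact hfG _, fun s t hst => ?_⟩
  exact (hstep s).le.trans ((strictMono_nat_of_lt_succ fun t => (Nat.le_add_right _ _).trans_lt
    (hstep t)).monotone hst)

lemma measureReal_pi_univ_pi {J : ℕ} {α : Type*} [MeasurableSpace α] (μ : Measure α)
    [SigmaFinite μ] (S : Fin J → Set α) :
    (Measure.pi fun _ : Fin J => μ).real (univ.pi S) = ∏ i, μ.real (S i) := by
  simp [measureReal_def, Measure.pi_pi, ENNReal.toReal_prod]

lemma measureReal_pi_exists_mem_and_exists_notMem_le {α : Type*} [MeasurableSpace α]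
    (μ : Measure α) [IsProbabilityMeasure μ] {S : Set α} (hS : MeasurableSet S) (J : ℕ) :
    (Measure.pi fun _ : Fin J => μ).real {ω | (∃ i, ω i ∈ S) ∧ ∃ i, ω i ∉ S}
      ≤ 1 - (1 / 2) ^ J := by
  have hside : ∀ T, MeasurableSet T → 1 / 2 ≤ μ.real T →
      {ω : Fin J → α | (∃ i, ω i ∈ S) ∧ ∃ i, ω i ∉ S} ⊆ (univ.pi fun _ => T)ᶜ →
      (Measure.pi fun _ : Fin J => μ).real {ω | (∃ i, ω i ∈ S) ∧ ∃ i, ω i ∉ S}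
        ≤ 1 - (1 / 2) ^ J := by
    intro T hT hhalf hsub
    calc _ ≤ (Measure.pi fun _ : Fin J => μ).real (univ.pi fun _ => T)ᶜ := measureReal_mono hsub
      _ = 1 - μ.real T ^ J := by
          rw [measureReal_compl (MeasurableSet.univ_pi fun _ => hT), measureReal_pi_univ_pi]
          simp
      _ ≤ 1 - (1 / 2) ^ J := by gcongr
  by_cases h : 1 / 2 ≤ μ.real S
  · exact hside S hS h fun ω hω hpi => hω.2.elim fun i hi => hi (hpi i (mem_univ i))
  · refine hside Sᶜ hS.compl ?_ fun ω hω hpi => hω.1.elim fun i hi => hpi i (mem_univ i) hi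
    rw [measureReal_compl hS, probReal_univ]
    linarith

lemma measureReal_iInter_preimage_le_prod_add_of_singleton {Ω β : Type*} [MeasurableSpace Ω]
    [DecidableEq β] {ν : Measure Ω} [IsFiniteMeasure ν] {m : ℕ} {f : Fin m → Ω → β}
    (hf : ∀ t b, MeasurableSet (f t ⁻¹' {b})) {δ : ℝ}
    (h : ∀ σ : Fin m → β, ν.real (⋂ t, f t ⁻¹' {σ t}) ≤ ∏ t, ν.real (f t ⁻¹' {σ t}) + δ)
    (W : Finset β) :
    ν.real (⋂ t, f t ⁻¹' W) ≤ ∏ t, ν.real (f t ⁻¹' W) + W.card ^ m * δ := by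
  have hcover : (⋂ t, f t ⁻¹' W) ⊆ ⋃ σ ∈ Fintype.piFinset fun _ => W, ⋂ t, f t ⁻¹' {σ t} := by
    intro ω hω
    simp only [mem_iInter, mem_preimage, Finset.mem_coe] at hω
    exact mem_biUnion (Fintype.mem_piFinset.mpr hω) (by simp)
  calc ν.real (⋂ t, f t ⁻¹' W)
      ≤ ∑ σ ∈ Fintype.piFinset (fun _ => W), ν.real (⋂ t, f t ⁻¹' {σ t}) :=
        (measureReal_mono hcover (measure_ne_top ν _)).trans (measureReal_biUnion_finset_le _ _)
    _ ≤ ∑ σ ∈ Fintype.piFinset (fun _ => W), (∏ t, ν.real (f t ⁻¹' {σ t}) + δ) :=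
        Finset.sum_le_sum fun σ _ => h σ
    _ = ∏ t, ∑ b ∈ W, ν.real (f t ⁻¹' {b}) + W.card ^ m * δ := by
        rw [Finset.sum_add_distrib, Finset.prod_univ_sum]
        simp
    _ = ∏ t, ν.real (f t ⁻¹' W) + W.card ^ m * δ := by
        rw [Finset.prod_congr rfl fun t _ =>
          sum_measureReal_preimage_singleton (μ := ν) W fun b _ => hf t b]

lemma measure_iInter_eq_zero_of_measureReal_iInter_le_prod_add {Ω : Type*} [MeasurableSpace Ω]
    {ν : Measure Ω} [IsFiniteMeasure ν] {D : ℕ → Set Ω} {a C : ℕ → ℝ} {r : ℝ}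
    (ha : Tendsto a atTop (𝓝 0)) (hr : r < 1) (hD : {k | ν.real (D k) ≤ r}.Infinite)
    (hchain : ∀ d m (k : Fin m → ℕ), (∀ s t, s < t → k s + d ≤ k t) →
      ν.real (⋂ t, D (k t)) ≤ ∏ t, ν.real (D (k t)) + C m * a d) :
    ν (⋂ k, D k) = 0 := by
  obtain ⟨k₀, hk₀⟩ := hD.nonempty
  have hr0 : 0 ≤ r := measureReal_nonneg.trans hk₀
  have hbound : ∀ m d, ν.real (⋂ k, D k) ≤ r ^ m + C m * a d := by
    intro m d
    obtain ⟨k, hkD, hk⟩ := hD.exists_seq_add_le d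
    calc ν.real (⋂ k, D k) ≤ ν.real (⋂ t : Fin m, D (k t)) :=
          measureReal_mono (subset_iInter fun t => iInter_subset _ _)
      _ ≤ ∏ t : Fin m, ν.real (D (k t)) + C m * a d := hchain d m _ fun s t hst => hk s t hst
      _ ≤ ∏ _t : Fin m, r + C m * a d := by
          gcongr with t
          exact hkD t
      _ = r ^ m + C m * a d := by rw [Fin.prod_const]
  have hpow : ∀ m, ν.real (⋂ k, D k) ≤ r ^ m := fun m =>
    ge_of_tendsto' (by simpa using tendsto_const_nhds.add (tendsto_const_nhds.mul ha))
      (hbound m)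
  have hzero : ν.real (⋂ k, D k) ≤ 0 :=
    ge_of_tendsto' (tendsto_pow_atTop_nhds_zero_of_lt_one hr0 hr) hpow
  exact (measureReal_eq_zero_iff).mp (hzero.antisymm measureReal_nonneg)

lemma ae_forall_ne_of_forall_measure_eq_zero {μ : Measure (ℕ → ℝ)}
    (hna : ∀ (k : ℕ) (c : ℝ), μ {z | z k = c} = 0) (x : ℕ → ℝ) : ∀ᵐ z ∂μ, ∀ k, z k ≠ x k :=
  ae_all_iff.mpr fun k => ae_iff.mpr (by simpa using hna k (x k))

noncomputable def signPattern {J : ℕ} (x : ℕ → ℝ) (k : ℕ) (ω : Fin J → ℕ → ℝ) : Fin J → Bool :=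
  fun i => decide (ω i k ≤ x k)

lemma signPattern_preimage_singleton {J : ℕ} (x : ℕ → ℝ) (k : ℕ) (w : Fin J → Bool) :
    signPattern x k ⁻¹' {w}
      = univ.pi fun i => (fun z : ℕ → ℝ => z k) ⁻¹' {y | decide (y ≤ x k) = w i} := by
  ext ω
  simp [signPattern, funext_iff]

lemma measurableSet_decide_le_eq (c : ℝ) (b : Bool) :
    MeasurableSet {y : ℝ | decide (y ≤ c) = b} := by
  cases b
  · simpa using measurableSet_lt measurable_const measurable_id
  · simpa using measurableSet_le measurable_id measurable_const

lemma measurableSet_signPattern_preimage_singleton {J : ℕ} (x : ℕ → ℝ) (k : ℕ)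
    (w : Fin J → Bool) : MeasurableSet (signPattern x k ⁻¹' {w}) := by
  rw [signPattern_preimage_singleton]
  exact MeasurableSet.univ_pi fun i => measurable_pi_apply k (measurableSet_decide_le_eq _ _)

abbrev pastMeasurableSpace (n : ℕ) : MeasurableSpace (ℕ → ℝ) :=
  ⨆ i ∈ Finset.Iic n, MeasurableSpace.comap (fun z : ℕ → ℝ => z i) (borel ℝ)

abbrev futureMeasurableSpace (n : ℕ) : MeasurableSpace (ℕ → ℝ) :=
  ⨆ (i : ℕ) (_ : n ≤ i), MeasurableSpace.comap (fun z : ℕ → ℝ => z i) (borel ℝ)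

def IsAlphaMixingWith (μ : Measure (ℕ → ℝ)) (a : ℕ → ℝ) : Prop :=
  ∀ n k : ℕ, ∀ A B : Set (ℕ → ℝ), MeasurableSet[pastMeasurableSpace n] A →
    MeasurableSet[futureMeasurableSpace (n + k)] B → |μ.real (A ∩ B) - μ.real A * μ.real B| ≤ a k

lemma measurableSet_pastMeasurableSpace_preimage {i n : ℕ} (h : i ≤ n) {A : Set ℝ}
    (hA : MeasurableSet A) : MeasurableSet[pastMeasurableSpace n] ((fun z : ℕ → ℝ => z i) ⁻¹' A) :=
  le_iSup₂ (f := fun i (_ : i ∈ Finset.Iic n) =>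
    MeasurableSpace.comap (fun z : ℕ → ℝ => z i) (borel ℝ)) i (Finset.mem_Iic.mpr h) _
    ⟨A, hA, rfl⟩

lemma measurableSet_futureMeasurableSpace_preimage {i n : ℕ} (h : n ≤ i) {A : Set ℝ}
    (hA : MeasurableSet A) :
    MeasurableSet[futureMeasurableSpace n] ((fun z : ℕ → ℝ => z i) ⁻¹' A) :=
  le_iSup₂ (f := fun i (_ : n ≤ i) =>
    MeasurableSpace.comap (fun z : ℕ → ℝ => z i) (borel ℝ)) i h _ ⟨A, hA, rfl⟩

namespace IsAlphaMixingWith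

variable {μ : Measure (ℕ → ℝ)} [IsProbabilityMeasure μ] {a : ℕ → ℝ} {d : ℕ}

lemma measureReal_iInter_le_prod_add (hμ : IsAlphaMixingWith μ a) (ha : 0 ≤ a d) {m : ℕ}
    {k : Fin m → ℕ} (hk : ∀ s t, s < t → k s + d ≤ k t) {A : Fin m → Set ℝ}
    (hA : ∀ t, MeasurableSet (A t)) :
    μ.real (⋂ t, (fun z : ℕ → ℝ => z (k t)) ⁻¹' A t)
      ≤ ∏ t, μ.real ((fun z : ℕ → ℝ => z (k t)) ⁻¹' A t) + m * a d := by
  induction m with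
  | zero => simp
  | succ m ih =>
    set P := (fun z : ℕ → ℝ => z (k 0)) ⁻¹' A 0
    set F := ⋂ t : Fin m, (fun z : ℕ → ℝ => z (k t.succ)) ⁻¹' A t.succ
    have hsplit : (⋂ t, (fun z : ℕ → ℝ => z (k t)) ⁻¹' A t) = P ∩ F := by
      ext z; simp [P, F, Fin.forall_fin_succ]
    have hF : MeasurableSet[futureMeasurableSpace (k 0 + d)] F :=
      MeasurableSet.iInter fun t => measurableSet_futureMeasurableSpace_preimage
        (hk 0 t.succ (Fin.succ_pos t)) (hA t.succ)
    have hmixing := (abs_le.mp (hμ (k 0) d P F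
      (measurableSet_pastMeasurableSpace_preimage le_rfl (hA 0)) hF)).2
    have hind := ih (fun s t hst => hk s.succ t.succ (Fin.succ_lt_succ_iff.mpr hst))
      (fun t => hA t.succ)
    have hP1 : μ.real P ≤ 1 := measureReal_le_one
    have hrest : 0 ≤ (m : ℝ) * a d := by positivity
    rw [hsplit, Fin.prod_univ_succ]
    push_cast
    nlinarith [measureReal_nonneg (μ := μ) (s := P)]

lemma measureReal_pi_iInter_le_prod_add (hμ : IsAlphaMixingWith μ a) (ha : 0 ≤ a d) {J m : ℕ}
    {k : Fin m → ℕ} (hk : ∀ s t, s < t → k s + d ≤ k t) {A : Fin m → Fin J → Set ℝ}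
    (hA : ∀ t i, MeasurableSet (A t i)) :
    (Measure.pi fun _ : Fin J => μ).real
        (⋂ t, univ.pi fun i => (fun z : ℕ → ℝ => z (k t)) ⁻¹' A t i)
      ≤ ∏ t, (Measure.pi fun _ : Fin J => μ).real
          (univ.pi fun i => (fun z : ℕ → ℝ => z (k t)) ⁻¹' A t i) + J * (m * a d) := by
  have hpi : (⋂ t, univ.pi fun i => (fun z : ℕ → ℝ => z (k t)) ⁻¹' A t i)
      = univ.pi fun i => ⋂ t, (fun z : ℕ → ℝ => z (k t)) ⁻¹' A t i := by
    ext ω; simpa using forall_comm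
  simp only [hpi, measureReal_pi_univ_pi]
  rw [Finset.prod_comm]
  simpa using Finset.univ.prod_le_prod_add_card_mul (by positivity)
    (fun _ _ => measureReal_nonneg) (fun _ _ => measureReal_le_one)
    (fun _ _ => Finset.prod_nonneg fun _ _ => measureReal_nonneg)
    (fun _ _ => Finset.prod_le_one (fun _ _ => measureReal_nonneg) fun _ _ => measureReal_le_one)
    (fun i _ => hμ.measureReal_iInter_le_prod_add ha hk fun t => hA t i)

lemma measure_univ_pi_eq_zero (hμ : IsAlphaMixingWith μ a) (ha0 : ∀ k, 0 ≤ a k)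
    (ha : Tendsto a atTop (𝓝 0)) {A : ℕ → Set ℝ} (hA : ∀ k, MeasurableSet (A k)) {r : ℝ}
    (hr : r < 1) (hinf : {k | μ.real ((fun z : ℕ → ℝ => z k) ⁻¹' A k) ≤ r}.Infinite) :
    μ (univ.pi A) = 0 := by
  rw [univ_pi_eq_iInter]
  exact measure_iInter_eq_zero_of_measureReal_iInter_le_prod_add ha hr hinf fun d m k hk =>
    hμ.measureReal_iInter_le_prod_add (ha0 d) hk fun t => hA (k t)

lemma halfRegionDepthSeq_eq_zero (hμ : IsAlphaMixingWith μ a) (ha0 : ∀ k, 0 ≤ a k)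
    (ha : Tendsto a atTop (𝓝 0)) (hna : ∀ (k : ℕ) (c : ℝ), μ {z | z k = c} = 0)
    (x : ℕ → ℝ) : halfRegionDepthSeq μ x = 0 := by
  have hsum : ∀ k, μ.real {z | z k ≤ x k} + μ.real {z | x k < z k} = 1 := fun k => by
    simpa [compl_ofPred] using measureReal_add_measureReal_compl (μ := μ)
      (measurableSet_le (measurable_pi_apply k) measurable_const)
  have hcover : {k | μ.real {z | z k ≤ x k} ≤ 1 / 2} ∪ {k | μ.real {z | x k < z k} ≤ 1 / 2}
      = univ := by
    ext k
    simp only [mem_union, mem_ofPred_eq, mem_univ, iff_true]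
    by_contra! h
    linarith [hsum k, h.1, h.2]
  rcases infinite_union.mp (hcover ▸ infinite_univ) with hle | hgt
  · have hzero : μ (univ.pi fun k => Iic (x k)) = 0 :=
      hμ.measure_univ_pi_eq_zero ha0 ha (fun k => measurableSet_Iic) (by norm_num) hle
    have hset : {z : ℕ → ℝ | ∀ k, z k ≤ x k} = univ.pi fun k => Iic (x k) := by
      ext; simp [Pi.le_def]
    rw [halfRegionDepthSeq, hset, hzero]
    exact min_eq_left zero_le
  · have hzero : μ (univ.pi fun k => Ioi (x k)) = 0 :=
      hμ.measure_univ_pi_eq_zero ha0 ha (fun k => measurableSet_Ioi) (by norm_num) hgt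
    have hae : {z : ℕ → ℝ | ∀ k, x k ≤ z k} ≤ᵐ[μ] univ.pi fun k => Ioi (x k) := by
      filter_upwards [ae_forall_ne_of_forall_measure_eq_zero hna x] with z hz hle
      exact mem_univ_pi.mpr fun k => (hle k).lt_of_ne (hz k).symm
    rw [halfRegionDepthSeq, measure_mono_null_ae hae hzero]
    exact min_eq_right zero_le

lemma measure_pi_forall_exists_le_and_exists_lt_eq_zero (hμ : IsAlphaMixingWith μ a)
    (ha0 : ∀ k, 0 ≤ a k) (ha : Tendsto a atTop (𝓝 0)) (J : ℕ) (x : ℕ → ℝ) :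
    (Measure.pi fun _ : Fin J => μ) {ω | ∀ k, (∃ i, ω i k ≤ x k) ∧ ∃ i, x k < ω i k} = 0 := by
  set W : Finset (Fin J → Bool) :=
    Finset.univ.filter fun w => (∃ i, w i = true) ∧ ∃ i, w i = false
  have hD : ∀ k, signPattern x k ⁻¹' (W : Set (Fin J → Bool))
      = {ω | (∃ i, ω i k ≤ x k) ∧ ∃ i, x k < ω i k} := by
    intro k; ext ω; simp [signPattern, W]
  have hset : {ω : Fin J → ℕ → ℝ | ∀ k, (∃ i, ω i k ≤ x k) ∧ ∃ i, x k < ω i k}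
      = ⋂ k, signPattern x k ⁻¹' (W : Set (Fin J → Bool)) := by
    simp only [hD]; ext; simp
  rw [hset]
  refine measure_iInter_eq_zero_of_measureReal_iInter_le_prod_add
    (C := fun m => W.card ^ m * (J * m)) ha (sub_lt_self 1 (by positivity : (0 : ℝ) < (1 / 2) ^ J))
    (infinite_univ.mono fun k _ => ?_) fun d m k hk => ?_
  · have := measureReal_pi_exists_mem_and_exists_notMem_le μ
      (measurableSet_le (measurable_pi_apply k) measurable_const) (S := {z | z k ≤ x k}) J
    simpa [hD] using this
  · convert measureReal_iInter_preimage_le_prod_add_of_singleton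
      (fun t w => measurableSet_signPattern_preimage_singleton x (k t) w) (fun σ => by
      simp only [signPattern_preimage_singleton]
      exact hμ.measureReal_pi_iInter_le_prod_add (ha0 d) hk fun t i =>
        measurableSet_decide_le_eq _ _) W using 2
    ring

lemma bandDepthSeq_eq_zero (hμ : IsAlphaMixingWith μ a) (ha0 : ∀ k, 0 ≤ a k)
    (ha : Tendsto a atTop (𝓝 0)) (hna : ∀ (k : ℕ) (c : ℝ), μ {z | z k = c} = 0) (J : ℕ)
    (x : ℕ → ℝ) :
    bandDepthSeq μ J x = 0 := by
  have hnoTies : ∀ᵐ ω ∂(Measure.pi fun _ : Fin J => μ), ∀ i k, ω i k ≠ x k :=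
    ae_all_iff.mpr fun i => (Measure.quasiMeasurePreserving_eval (fun _ => μ) i).ae
      (p := fun z => ∀ k, z k ≠ x k) (ae_forall_ne_of_forall_measure_eq_zero hna x)
  refine Finset.sum_eq_zero fun j _ => measure_mono_null_ae ?_
    (hμ.measure_pi_forall_exists_le_and_exists_lt_eq_zero ha0 ha J x)
  filter_upwards [hnoTies] with ω hω hband k
  obtain ⟨⟨i, -, hi⟩, i', -, hi'⟩ := hband k
  exact ⟨⟨i, hi⟩, i', hi'.lt_of_ne (hω i' k).symm⟩

end IsAlphaMixingWith

theorem bandDepthSeq_and_halfRegionDepthSeq_ae_eq_zero_general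
    (J : ℕ)
    (μ : Measure (ℕ → ℝ)) [IsProbabilityMeasure μ]
    -- each coordinate has a non-atomic distribution
    (hna : ∀ (k : ℕ) (c : ℝ), μ {z | z k = c} = 0)
    -- `X` is α-mixing with coefficients `a`, and `∑ a_k^(1-1/(2p)) < ∞` for some `p ≥ 1`
    (a : ℕ → ℝ) (ha0 : ∀ k, 0 ≤ a k)
    (hmix : ∀ n k : ℕ, ∀ A B : Set (ℕ → ℝ),
      MeasurableSet[⨆ i ∈ Finset.Iic n,
        MeasurableSpace.comap (fun z : ℕ → ℝ => z i) (borel ℝ)] A →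
      MeasurableSet[⨆ (i : ℕ) (_ : n + k ≤ i),
        MeasurableSpace.comap (fun z : ℕ → ℝ => z i) (borel ℝ)] B →
      |(μ (A ∩ B)).toReal - (μ A).toReal * (μ B).toReal| ≤ a k)
    (hmix0 : Filter.Tendsto a Filter.atTop (nhds 0)) :
    ∀ᵐ x ∂μ, bandDepthSeq μ J x = 0 ∧ halfRegionDepthSeq μ x = 0 :=
  ae_of_all μ fun x => ⟨IsAlphaMixingWith.bandDepthSeq_eq_zero hmix ha0 hmix0 hna J x,
    IsAlphaMixingWith.halfRegionDepthSeq_eq_zero hmix ha0 hmix0 hna x⟩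

/-- Theorem 3.1: if `X = (X_1, X_2, …)` is an `α`-mixing random sequence whose mixing
coefficients satisfy `∑ α_k^(1−1/(2p)) < ∞` for some `p ≥ 1` and whose coordinates have
non-atomic distributions, then `BD(x) = 0` and `HRD(x) = 0` for `μ`-a.e. `x`. -/
theorem bandDepthSeq_and_halfRegionDepthSeq_ae_eq_zero
    (J : ℕ) (hJ : 2 ≤ J)
    (μ : Measure (ℕ → ℝ)) [IsProbabilityMeasure μ]
    -- each coordinate has a non-atomic distribution
    (hna : ∀ (k : ℕ) (c : ℝ), μ {z | z k = c} = 0)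
    -- `X` is α-mixing with coefficients `a`, and `∑ a_k^(1-1/(2p)) < ∞` for some `p ≥ 1`
    (a : ℕ → ℝ) (ha0 : ∀ k, 0 ≤ a k)
    (hmix : ∀ n k : ℕ, ∀ A B : Set (ℕ → ℝ),
      MeasurableSet[⨆ i ∈ Finset.Iic n,
        MeasurableSpace.comap (fun z : ℕ → ℝ => z i) (borel ℝ)] A →
      MeasurableSet[⨆ (i : ℕ) (_ : n + k ≤ i),
        MeasurableSpace.comap (fun z : ℕ → ℝ => z i) (borel ℝ)] B →
      |(μ (A ∩ B)).toReal - (μ A).toReal * (μ B).toReal| ≤ a k)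
    (hmix0 : Filter.Tendsto a Filter.atTop (nhds 0))
    (p : ℝ) (hp : 1 ≤ p)
    (hasum : Summable fun k => a k ^ (1 - 1 / (2 * p))) :
    ∀ᵐ x ∂μ, bandDepthSeq μ J x = 0 ∧ halfRegionDepthSeq μ x = 0 :=
  bandDepthSeq_and_halfRegionDepthSeq_ae_eq_zero_general J μ hna a ha0 hmix hmix0
end

section
/- Let {B_t}_{t∈[0,1]} be a standard Brownian motion on [0,1] with continuous sample paths starting at 0, and let f = {f_t}_{t∈[0,1]} ∈ C[0,1] satisfy f_0 = 0 and be such that f changes sign infinitely often in every right neighbourhood of zero, i.e., for every ε > 0 there exist s, t ∈ (0, ε) with f_s < 0 and f_t > 0. Define T = inf{ t > 0 : B_t − f_t > 0 } and S = inf{ t > 0 : B_t − f_t < 0 }. Then P(T = 0) = P(S = 0) = 1. -/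
/-!
Pick times `s n ↓ 0` with `f (s n) < 0`. Each `B (s n)` is a centred Gaussian, so
`P (B (s n) > f (s n)) ≥ 1/2`, and the event that this happens for infinitely many `n` has
probability at least `1/2`. Since `B (s n)` is the sum of the independent increments
`B (s k) - B (s (k + 1))`, `k ≥ n`, that event lies in their tail σ-algebra, so by Kolmogorov's
0-1 law it is almost sure; on it `T = 0`. Applying this to `-B` and `-f` gives `S = 0`.
-/

set_option synthInstance.maxHeartbeats 400000

open MeasureTheory ProbabilityTheory ENNReal

abbrev unitI : Type := Set.Icc (0 : ℝ) 1

def IsStdBrownianMotion {Ω : Type*} [MeasurableSpace Ω] [MeasurableSpace C(unitI, ℝ)]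
    (P : Measure Ω) (B : Ω → C(unitI, ℝ)) : Prop :=
  Measurable B ∧
  (∀ ω, B ω ⟨0, Set.left_mem_Icc.mpr zero_le_one⟩ = 0) ∧
  (∀ s t : unitI, (s : ℝ) ≤ (t : ℝ) →
    P.map (fun ω => B ω t - B ω s) = gaussianReal 0 (Real.toNNReal ((t : ℝ) - (s : ℝ)))) ∧
  (∀ (n : ℕ) (t : Fin (n + 1) → unitI), Monotone t →
    iIndepFun
      (fun k : Fin n => fun ω => B ω (t k.succ) - B ω (t k.castSucc)) P)

open Filter Topology Set

section Limsup

variable {Ω : Type*} {m0 : MeasurableSpace Ω} {μ : Measure Ω}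

lemma le_measure_limsup_atTop [IsFiniteMeasure μ] {A : ℕ → Set Ω}
    (hA : ∀ n, MeasurableSet (A n)) {δ : ℝ≥0∞} (h : ∀ n, δ ≤ μ (A n)) :
    δ ≤ μ (limsup A atTop) := by
  have h_anti : Antitone fun m => ⋃ n ≥ m, A n := fun a b hab =>
    biUnion_mono (fun n hn => hab.trans hn) fun _ _ => subset_rfl
  simp only [limsup_eq_iInf_iSup_of_nat, iSup_eq_iUnion, iInf_eq_iInter]
  rw [h_anti.measure_iInter
    (fun m => (MeasurableSet.biUnion (to_countable _) fun n _ => hA n).nullMeasurableSet)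
    ⟨0, measure_ne_top μ _⟩]
  exact le_iInf fun m => (h m).trans (measure_mono (subset_biUnion_of_mem (le_refl m)))

lemma measurableSet_limsup_atTop_of_forall_measurableSet_iSup_ge
    {s : ℕ → MeasurableSpace Ω} {A : ℕ → Set Ω}
    (hA : ∀ n, MeasurableSet[⨆ k ≥ n, s k] (A n)) :
    MeasurableSet[limsup s atTop] (limsup A atTop) := by
  rw [limsup_eq_iInf_iSup_of_nat, MeasurableSpace.measurableSet_iInf]
  intro m
  have h_mono : ∀ i, (⨆ k ≥ i + m, s k) ≤ ⨆ k ≥ m, s k := fun i =>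
    biSup_mono fun k hk => (Nat.le_add_left m i).trans hk
  rw [← limsup_nat_add A m]
  exact @MeasurableSet.measurableSet_limsup _ (⨆ k ≥ m, s k) _ fun i => h_mono i _ (hA (i + m))

lemma ae_frequently_mem_of_forall_measurableSet_iSup_ge [IsProbabilityMeasure μ]
    {s : ℕ → MeasurableSpace Ω} (h_le : ∀ n, s n ≤ m0) (h_indep : iIndep s μ)
    {A : ℕ → Set Ω} (hA : ∀ n, MeasurableSet[⨆ k ≥ n, s k] (A n)) {δ : ℝ≥0∞} (hδ : δ ≠ 0)
    (h : ∀ n, δ ≤ μ (A n)) :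
    ∀ᵐ ω ∂μ, ∃ᶠ n in atTop, ω ∈ A n := by
  have hA_meas : ∀ n, MeasurableSet (A n) := fun n =>
    iSup₂_le (fun k _ => h_le k) _ (hA n)
  have h_pos : μ (limsup A atTop) ≠ 0 :=
    (pos_iff_ne_zero.mpr hδ |>.trans_le (le_measure_limsup_atTop hA_meas h)).ne'
  have h_one : μ (limsup A atTop) = 1 :=
    (measure_zero_or_one_of_measurableSet_limsup_atTop h_le h_indep
      (measurableSet_limsup_atTop_of_forall_measurableSet_iSup_ge hA)).resolve_left h_pos
  simp_rw [← mem_limsup_iff_frequently_mem]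
  exact (ae_iff_measure_eq (MeasurableSet.measurableSet_limsup hA_meas).nullMeasurableSet).mpr
    (h_one.trans measure_univ.symm)

end Limsup

lemma half_le_measure_Ici_zero_of_map_neg_eq {μ : Measure ℝ} [IsProbabilityMeasure μ]
    (h : μ.map (fun x => -x) = μ) : 1 / 2 ≤ μ (Ici 0) := by
  have h_symm : μ (Iic 0) = μ (Ici 0) := by
    conv_lhs => rw [← h]
    rw [Measure.map_apply measurable_neg measurableSet_Iic]
    congr 1
    ext x
    simp
  have h_cover : 1 ≤ μ (Ici 0) * 2 := calc
    1 = μ (Iic 0) + μ (Ioi 0) := by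
      rw [← measure_union (Iic_disjoint_Ioi le_rfl) measurableSet_Ioi, Iic_union_Ioi,
        measure_univ]
    _ ≤ μ (Ici 0) + μ (Ici 0) := add_le_add h_symm.le (measure_mono Ioi_subset_Ici_self)
    _ = μ (Ici 0) * 2 := by ring
  exact ENNReal.div_le_of_le_mul h_cover

lemma half_le_gaussianReal_Ioi_of_neg (v : NNReal) {c : ℝ} (hc : c < 0) :
    1 / 2 ≤ gaussianReal 0 v (Ioi c) :=
  (half_le_measure_Ici_zero_of_map_neg_eq (by rw [gaussianReal_map_neg, neg_zero])).trans
    (measure_mono (Ici_subset_Ioi.mpr hc))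

lemma iIndepFun_of_forall_fin {Ω β : Type*} {m0 : MeasurableSpace Ω} {μ : Measure Ω}
    [MeasurableSpace β] {Y : ℕ → Ω → β} (h : ∀ N, iIndepFun (fun i : Fin N => Y i) μ) :
    iIndepFun Y μ := by
  refine iIndepFun_iff_finset.mpr fun S => ?_
  have h_lt : ∀ j ∈ S, j < S.sup id + 1 := fun j hj => Nat.lt_succ_of_le (S.le_sup (f := id) hj)
  exact (h (S.sup id + 1)).precomp (g := fun j : S => ⟨j, h_lt j j.2⟩)
    fun a b hab => Subtype.ext (congrArg Fin.val hab)

lemma measurable_iSup_comap_ge_of_tendsto_sum {Ω β : Type*} [AddCommMonoid β]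
    [TopologicalSpace β] [TopologicalSpace.PseudoMetrizableSpace β] [mβ : MeasurableSpace β]
    [BorelSpace β] [MeasurableAdd₂ β] {Y : ℕ → Ω → β} {X : Ω → β} {n : ℕ}
    (hX : ∀ ω, Tendsto (fun j => ∑ k ∈ Finset.range j, Y (n + k) ω) atTop (𝓝 (X ω))) :
    Measurable[⨆ k ≥ n, mβ.comap (Y k)] X := by
  let M : MeasurableSpace Ω := ⨆ k ≥ n, mβ.comap (Y k)
  have hY : ∀ k, Measurable[M] (Y (n + k)) := fun k =>
    (comap_measurable (Y (n + k))).mono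
      (le_iSup₂ (f := fun k (_ : k ≥ n) => mβ.comap (Y k)) (n + k) (Nat.le_add_right n k)) le_rfl
  exact measurable_of_tendsto_metrizable' atTop
    (fun j => Finset.measurable_sum _ fun k _ => hY k) (tendsto_pi_nhds.mpr hX)

lemma exists_seq_antitone_tendsto_zero_of_forall_pos {p : unitI → Prop}
    (h : ∀ ε : ℝ, 0 < ε → ∃ s : unitI, 0 < (s : ℝ) ∧ (s : ℝ) < ε ∧ p s) :
    ∃ s : ℕ → unitI, Antitone s ∧ Tendsto s atTop (𝓝 0) ∧ ∀ n, 0 < s n ∧ p (s n) := by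
  have h_glb : IsGLB {s : unitI | 0 < s ∧ p s} 0 := by
    refine ⟨fun s hs => hs.1.le, fun b hb => ?_⟩
    by_contra! hb0
    obtain ⟨s, hs0, hsb, hs⟩ := h b hb0
    exact not_lt.mpr (hb ⟨hs0, hs⟩) hsb
  obtain ⟨s0, hs0, -, hs⟩ := h 1 one_pos
  obtain ⟨s, hs_anti, -, hs_lim, hs_mem⟩ :=
    h_glb.exists_seq_strictAnti_tendsto_of_notMem (fun h0 => h0.1.ne rfl) ⟨s0, hs0, hs⟩
  exact ⟨s, hs_anti.antitone, hs_lim, hs_mem⟩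

lemma sInf_pos_setOf_eq_zero_of_frequently {p : unitI → Prop} {s : ℕ → unitI}
    (hs : Tendsto s atTop (𝓝 0)) (hp : ∃ᶠ n in atTop, 0 < s n ∧ p (s n)) :
    sInf {x : EReal | ∃ t : unitI, x = ((t : ℝ) : EReal) ∧ 0 < (t : ℝ) ∧ p t} = 0 := by
  refine le_antisymm (le_of_forall_gt fun c hc => ?_) (le_sInf ?_)
  · obtain ⟨ε, hε, hεc⟩ := EReal.lt_iff_exists_real_btwn.mp hc
    have h_small : ∀ᶠ n in atTop, (s n : ℝ) < ε :=
      (continuous_subtype_val.tendsto 0 |>.comp hs).eventually (gt_mem_nhds (by exact_mod_cast hε))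
    obtain ⟨n, ⟨hn0, hnp⟩, hnε⟩ := (hp.and_eventually h_small).exists
    exact sInf_lt_iff.mpr ⟨_, ⟨s n, rfl, hn0, hnp⟩, (EReal.coe_lt_coe_iff.mpr hnε).trans hεc⟩
  · rintro x ⟨t, rfl, -, -⟩
    exact EReal.coe_nonneg.mpr t.2.1

namespace IsStdBrownianMotion

variable {Ω : Type*} [MeasurableSpace Ω] [MeasurableSpace C(unitI, ℝ)] {P : Measure Ω}
  {B : Ω → C(unitI, ℝ)}

lemma measurable_eval [BorelSpace C(unitI, ℝ)] (hB : IsStdBrownianMotion P B) (t : unitI) :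
    Measurable fun ω => B ω t :=
  (continuous_eval_const t).measurable.comp hB.1

lemma map_eval (hB : IsStdBrownianMotion P B) (t : unitI) :
    P.map (fun ω => B ω t) = gaussianReal 0 (t : ℝ).toNNReal := by
  simpa only [hB.2.1, sub_zero] using hB.2.2.1 ⟨0, Set.left_mem_Icc.mpr zero_le_one⟩ t t.2.1

lemma neg [BorelSpace C(unitI, ℝ)] (hB : IsStdBrownianMotion P B) :
    IsStdBrownianMotion P (fun ω => -B ω) := by
  refine ⟨continuous_neg.measurable.comp hB.1,
    fun ω => by rw [ContinuousMap.neg_apply, hB.2.1, neg_zero], fun s t hst => ?_, fun n t ht => ?_⟩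
  · have h_meas : Measurable fun ω => B ω t - B ω s :=
      (hB.measurable_eval t).sub (hB.measurable_eval s)
    have h_comp : (fun ω => (-B ω) t - (-B ω) s) = (fun x => -x) ∘ fun ω => B ω t - B ω s := by
      ext ω
      simp only [ContinuousMap.neg_apply, Function.comp_apply]
      ring
    rw [h_comp, ← Measure.map_map measurable_neg h_meas, hB.2.2.1 s t hst, gaussianReal_map_neg,
      neg_zero]
  · convert (hB.2.2.2 n t ht).comp (fun _ x => -x) fun _ => measurable_neg using 2 with k
    ext ω
    simp only [ContinuousMap.neg_apply, Function.comp_apply]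
    ring

lemma iIndepFun_increments (hB : IsStdBrownianMotion P B) {s : ℕ → unitI} (hs : Antitone s) :
    iIndepFun (fun n ω => B ω (s n) - B ω (s (n + 1))) P := by
  refine iIndepFun_of_forall_fin fun N => ?_
  have h := (hB.2.2.2 N (fun i => s (N - i)) fun i j hij => hs (Nat.sub_le_sub_left hij N)).precomp
    Fin.rev_injective
  convert h using 3 with i ω
  have hi := i.isLt
  rw [Fin.val_succ, Fin.val_castSucc, Fin.val_rev]
  congr 3 <;> omega

lemma measurable_eval_iSup_comap_increments (hB : IsStdBrownianMotion P B) {s : ℕ → unitI}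
    (hs : Tendsto s atTop (𝓝 0)) (n : ℕ) :
    Measurable[⨆ k ≥ n, MeasurableSpace.comap (fun ω => B ω (s k) - B ω (s (k + 1))) inferInstance]
      fun ω => B ω (s n) := by
  refine measurable_iSup_comap_ge_of_tendsto_sum fun ω => ?_
  have h_lim : Tendsto (fun j => B ω (s (n + j))) atTop (𝓝 0) := by
    have h := ((B ω).continuous.tendsto 0).comp (hs.comp (tendsto_add_atTop_nat n))
    rw [show B ω 0 = 0 from hB.2.1 ω] at h
    exact h.congr fun j => by simp [add_comm]
  have h_sum : ∀ j, ∑ k ∈ Finset.range j, (B ω (s (n + k)) - B ω (s (n + k + 1))) =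
      B ω (s n) - B ω (s (n + j)) := fun j => Finset.sum_range_sub' (fun k => B ω (s (n + k))) j
  simpa only [h_sum, sub_zero] using (tendsto_const_nhds (x := B ω (s n))).sub h_lim

lemma ae_frequently_lt_eval [BorelSpace C(unitI, ℝ)] [IsProbabilityMeasure P]
    (hB : IsStdBrownianMotion P B) {s : ℕ → unitI} (hs_anti : Antitone s)
    (hs : Tendsto s atTop (𝓝 0)) {c : ℕ → ℝ} (hc : ∀ n, c n < 0) :
    ∀ᵐ ω ∂P, ∃ᶠ n in atTop, c n < B ω (s n) := by
  refine ae_frequently_mem_of_forall_measurableSet_iSup_ge (A := fun n => {ω | c n < B ω (s n)})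
    (fun n => ((hB.measurable_eval _).sub (hB.measurable_eval _)).comap_le)
    (hB.iIndepFun_increments hs_anti).iIndep
    (fun n => hB.measurable_eval_iSup_comap_increments hs n measurableSet_Ioi)
    (δ := 1 / 2) (by norm_num) fun n => ?_
  change 1 / 2 ≤ P ((fun ω => B ω (s n)) ⁻¹' Ioi (c n))
  rw [← Measure.map_apply (hB.measurable_eval _) measurableSet_Ioi, hB.map_eval]
  exact half_le_gaussianReal_Ioi_of_neg _ (hc n)

lemma ae_sInf_setOf_sub_pos_eq_zero [BorelSpace C(unitI, ℝ)] [IsProbabilityMeasure P]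
    (hB : IsStdBrownianMotion P B) {f : C(unitI, ℝ)}
    (hf : ∀ ε : ℝ, 0 < ε → ∃ s : unitI, 0 < (s : ℝ) ∧ (s : ℝ) < ε ∧ f s < 0) :
    ∀ᵐ ω ∂P, sInf {x : EReal | ∃ t : unitI, x = ((t : ℝ) : EReal) ∧ 0 < (t : ℝ) ∧
      0 < B ω t - f t} = 0 := by
  obtain ⟨s, hs_anti, hs_lim, hs⟩ := exists_seq_antitone_tendsto_zero_of_forall_pos hf
  filter_upwards [hB.ae_frequently_lt_eval hs_anti hs_lim fun n => (hs n).2] with ω hω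
  exact sInf_pos_setOf_eq_zero_of_frequently hs_lim
    (hω.mono fun n hn => ⟨(hs n).1, sub_pos.mpr hn⟩)

end IsStdBrownianMotion

theorem brownian_crosses_sign_changing_curve_immediately_general
    {Ω : Type*} [MeasurableSpace Ω] (P : Measure Ω) [IsProbabilityMeasure P]
    [MeasurableSpace C(unitI, ℝ)] [BorelSpace C(unitI, ℝ)]
    (B : Ω → C(unitI, ℝ)) (hBM : IsStdBrownianMotion P B)
    (f : C(unitI, ℝ))
    (hsign : ∀ ε : ℝ, 0 < ε → ∃ s t : unitI,
      0 < (s : ℝ) ∧ (s : ℝ) < ε ∧ f s < 0 ∧ 0 < (t : ℝ) ∧ (t : ℝ) < ε ∧ 0 < f t) :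
    (∀ᵐ ω ∂P, sInf {x : EReal | ∃ t : unitI, x = ((t : ℝ) : EReal) ∧ 0 < (t : ℝ) ∧
        0 < B ω t - f t} = (0 : EReal)) ∧
    (∀ᵐ ω ∂P, sInf {x : EReal | ∃ t : unitI, x = ((t : ℝ) : EReal) ∧ 0 < (t : ℝ) ∧
        B ω t - f t < 0} = (0 : EReal)) := by
  refine ⟨hBM.ae_sInf_setOf_sub_pos_eq_zero fun ε hε => ?_, ?_⟩
  · obtain ⟨s, -, hs0, hsε, hs, -⟩ := hsign ε hε
    exact ⟨s, hs0, hsε, hs⟩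
  · have h_neg : ∀ ε : ℝ, 0 < ε → ∃ t : unitI, 0 < (t : ℝ) ∧ (t : ℝ) < ε ∧ (-f) t < 0 := by
      intro ε hε
      obtain ⟨-, t, -, -, -, ht0, htε, ht⟩ := hsign ε hε
      exact ⟨t, ht0, htε, neg_neg_iff_pos.mpr ht⟩
    filter_upwards [hBM.neg.ae_sInf_setOf_sub_pos_eq_zero h_neg] with ω hω
    simpa only [ContinuousMap.neg_apply, neg_sub_neg, sub_pos, sub_neg] using hω

/-- Lemma 6.5 (for Brownian motion): let `B` be a standard Brownian motion on `[0,1]` started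
at `0`, and let `f ∈ C[0,1]` with `f(0) = 0` change sign infinitely often in every right
neighbourhood of `0`.  With `T = inf{t > 0 : B_t − f_t > 0}` and `S = inf{t > 0 : B_t − f_t < 0}`
(infima taken in the extended reals, so `inf ∅ = +∞`), we have `P(T = 0) = P(S = 0) = 1`. -/
theorem brownian_crosses_sign_changing_curve_immediately
    {Ω : Type*} [MeasurableSpace Ω] (P : Measure Ω) [IsProbabilityMeasure P]
    [MeasurableSpace C(unitI, ℝ)] [BorelSpace C(unitI, ℝ)]
    (B : Ω → C(unitI, ℝ)) (hBM : IsStdBrownianMotion P B)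
    (f : C(unitI, ℝ)) (hf0 : f ⟨0, Set.left_mem_Icc.mpr zero_le_one⟩ = 0)
    (hsign : ∀ ε : ℝ, 0 < ε → ∃ s t : unitI,
      0 < (s : ℝ) ∧ (s : ℝ) < ε ∧ f s < 0 ∧ 0 < (t : ℝ) ∧ (t : ℝ) < ε ∧ 0 < f t) :
    (∀ᵐ ω ∂P, sInf {x : EReal | ∃ t : unitI, x = ((t : ℝ) : EReal) ∧ 0 < (t : ℝ) ∧
        0 < B ω t - f t} = (0 : EReal)) ∧
    (∀ᵐ ω ∂P, sInf {x : EReal | ∃ t : unitI, x = ((t : ℝ) : EReal) ∧ 0 < (t : ℝ) ∧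
        B ω t - f t < 0} = (0 : EReal)) :=
  brownian_crosses_sign_changing_curve_immediately_general P B hBM f hsign
end

section
/- Fix an integer J ≥ 2. Let X = {X_t}_{t∈[0,1]} be a random element of C[0,1], and for t ∈ [0,1] let F_t denote the distribution function of X_t. Then for every x = {x_t}_{t∈[0,1]} ∈ C[0,1]: MBD(x) = ∑_{j=2}^J ∫_0^1 [ 1 − P(X_t < x_t)^j − P(X_t > x_t)^j ] dt and MHRD(x) = min{ ∫_0^1 P(X_t ≤ x_t) dt, ∫_0^1 P(X_t ≥ x_t) dt }. -/
/-! By Fubini, each depth is the time integral of a pointwise probability. For fixed `t`, the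
first `j` copies fail to straddle `x t` exactly when they all lie strictly below it or all lie
strictly above it; these events are disjoint, and by independence they have probabilities
`P(X_t < x_t)^j` and `P(X_t > x_t)^j`. -/

set_option synthInstance.maxHeartbeats 400000

open MeasureTheory ENNReal

/-- The modified band depth of `x ∈ C[0,1]` with respect to a probability measure `μ` on
`C[0,1]`, with `J` independent copies (realized via the product measure `μ^{⊗J}`):
`MBD(x) = ∑_{j=2}^J E[λ({t : min_{1≤i≤j} X_{i,t} ≤ x_t ≤ max_{1≤i≤j} X_{i,t}})]`. -/
noncomputable def modBandDepth [MeasurableSpace C(unitI, ℝ)]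
    (μ : Measure C(unitI, ℝ)) [SigmaFinite μ] (J : ℕ) (x : C(unitI, ℝ)) : ℝ :=
  ∑ j ∈ Finset.Icc 2 J, ∫ ω, (volume {t : unitI |
      (∃ i : Fin J, (i : ℕ) < j ∧ ω i t ≤ x t) ∧
      (∃ i : Fin J, (i : ℕ) < j ∧ x t ≤ ω i t)}).toReal
    ∂(Measure.pi fun _ : Fin J => μ)

/-- The modified half-region depth of `x ∈ C[0,1]` with respect to a probability measure `μ`
on `C[0,1]`: `MHRD(x) = min{ E[λ({t : X_t ≤ x_t})], E[λ({t : X_t ≥ x_t})] }`. -/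
noncomputable def modHalfRegionDepth [MeasurableSpace C(unitI, ℝ)]
    (μ : Measure C(unitI, ℝ)) (x : C(unitI, ℝ)) : ℝ :=
  min (∫ z, (volume {t : unitI | z t ≤ x t}).toReal ∂μ)
      (∫ z, (volume {t : unitI | x t ≤ z t}).toReal ∂μ)

section Fubini

variable {α β : Type*} [MeasurableSpace α] [MeasurableSpace β]

theorem integral_measure_setOf_toReal_comm (ν : Measure α) (ρ : Measure β)
    [IsFiniteMeasure ν] [IsFiniteMeasure ρ] {P : α → β → Prop}
    (hP : MeasurableSet {p : α × β | P p.1 p.2}) :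
    ∫ a, (ρ {b | P a b}).toReal ∂ν = ∫ b, (ν {a | P a b}).toReal ∂ρ := by
  change ∫ a, (ρ (Prod.mk a ⁻¹' {p : α × β | P p.1 p.2})).toReal ∂ν
    = ∫ b, (ν ((·, b) ⁻¹' {p : α × β | P p.1 p.2})).toReal ∂ρ
  rw [integral_toReal (measurable_measure_prodMk_left hP).aemeasurable
      (ae_of_all _ fun _ => measure_lt_top _ _),
    integral_toReal (measurable_measure_prodMk_right hP).aemeasurable
      (ae_of_all _ fun _ => measure_lt_top _ _),
    ← Measure.prod_apply hP, Measure.prod_apply_symm hP]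

end Fubini

section Band

variable {C : Type*} [MeasurableSpace C] (μ : Measure C) [IsProbabilityMeasure μ] {J j : ℕ}

theorem measure_pi_setOf_forall_lt_mem (hjJ : j ≤ J) (B : Set C) :
    Measure.pi (fun _ : Fin J => μ) {ω | ∀ i : Fin J, (i : ℕ) < j → ω i ∈ B} = μ B ^ j := by
  have hpi : {ω : Fin J → C | ∀ i : Fin J, (i : ℕ) < j → ω i ∈ B}
      = Set.univ.pi fun i : Fin J => if (i : ℕ) < j then B else Set.univ := by
    ext ω
    simp only [Set.mem_ofPred_eq, Set.mem_univ_pi]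
    refine forall_congr' fun i => ?_
    split_ifs <;> simp [*]
  rw [hpi, Measure.pi_pi]
  simp only [apply_ite μ, measure_univ, Finset.prod_ite, Finset.prod_const_one, mul_one,
    Finset.prod_const, Fin.card_filter_val_lt, min_eq_right hjJ]

theorem measurableSet_pi_setOf_forall_lt_mem {B : Set C} (hB : MeasurableSet B) :
    MeasurableSet {ω : Fin J → C | ∀ i : Fin J, (i : ℕ) < j → ω i ∈ B} := by
  simp only [Set.ofPred_forall]
  exact .iInter fun i => .iInter fun _ => measurable_pi_apply i hB

theorem measure_pi_band_toReal (hj : 0 < j) (hjJ : j ≤ J) {f : C → ℝ} (hf : Measurable f)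
    (c : ℝ) :
    (Measure.pi (fun _ : Fin J => μ) {ω | (∃ i : Fin J, (i : ℕ) < j ∧ f (ω i) ≤ c) ∧
        (∃ i : Fin J, (i : ℕ) < j ∧ c ≤ f (ω i))}).toReal
      = 1 - (μ {z | f z < c}).toReal ^ j - (μ {z | c < f z}).toReal ^ j := by
  set below := {ω : Fin J → C | ∀ i : Fin J, (i : ℕ) < j → ω i ∈ {z | f z < c}}
  set above := {ω : Fin J → C | ∀ i : Fin J, (i : ℕ) < j → ω i ∈ {z | c < f z}}
  have hband : {ω : Fin J → C | (∃ i : Fin J, (i : ℕ) < j ∧ f (ω i) ≤ c) ∧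
      (∃ i : Fin J, (i : ℕ) < j ∧ c ≤ f (ω i))} = (above ∪ below)ᶜ := by
    ext ω
    simp [above, below, not_forall, not_lt]
  have hdisj : Disjoint above below := by
    refine Set.disjoint_left.mpr fun ω hab hbe => ?_
    have hlt : c < f (ω ⟨0, hj.trans_le hjJ⟩) := hab _ hj
    exact hlt.not_gt (hbe _ hj)
  have hbelow : MeasurableSet below :=
    measurableSet_pi_setOf_forall_lt_mem (measurableSet_lt hf measurable_const)
  have habove : MeasurableSet above :=
    measurableSet_pi_setOf_forall_lt_mem (measurableSet_lt measurable_const hf)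
  rw [hband, ← measureReal_def, probReal_compl_eq_one_sub (habove.union hbelow),
    measureReal_union hdisj hbelow, measureReal_def, measureReal_def,
    measure_pi_setOf_forall_lt_mem μ hjJ, measure_pi_setOf_forall_lt_mem μ hjJ,
    ENNReal.toReal_pow, ENNReal.toReal_pow]
  ring

end Band

theorem measurable_continuousMap_apply_prod {α X : Type*} [MeasurableSpace α]
    [TopologicalSpace X] [LocallyCompactSpace X] [SecondCountableTopology X]
    [MeasurableSpace X] [OpensMeasurableSpace X]
    [MeasurableSpace C(X, ℝ)] [OpensMeasurableSpace C(X, ℝ)]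
    {g : α → C(X, ℝ)} (hg : Measurable g) : Measurable fun p : α × X => g p.1 p.2 :=
  continuous_eval.measurable.comp (hg.prodMap measurable_id)

theorem modBandDepth_eq_integral
    [MeasurableSpace C(unitI, ℝ)] [OpensMeasurableSpace C(unitI, ℝ)]
    (J : ℕ) (μ : Measure C(unitI, ℝ)) [IsProbabilityMeasure μ] (x : C(unitI, ℝ)) :
    modBandDepth μ J x = ∑ j ∈ Finset.Icc 2 J, ∫ t : unitI,
        (1 - (μ {z | z t < x t}).toReal ^ j - (μ {z | x t < z t}).toReal ^ j) := by
  refine Finset.sum_congr rfl fun j hj => ?_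
  obtain ⟨hj2, hjJ⟩ := Finset.mem_Icc.mp hj
  have hcopy (i : Fin J) : Measurable fun p : (Fin J → C(unitI, ℝ)) × unitI => p.1 i p.2 :=
    measurable_continuousMap_apply_prod (g := fun ω : Fin J → C(unitI, ℝ) => ω i)
      (measurable_pi_apply i)
  have hx : Measurable fun p : (Fin J → C(unitI, ℝ)) × unitI => x p.2 :=
    x.continuous.measurable.comp measurable_snd
  rw [integral_measure_setOf_toReal_comm]
  · refine integral_congr_ae (ae_of_all _ fun t => ?_)
    exact measure_pi_band_toReal μ (by omega) hjJ (continuous_eval_const t).measurable (x t)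
  · exact measurableSet_setOfPred.mpr <| .and
      (.exists fun i => measurable_const.and <|
        measurableSet_setOfPred.mp (measurableSet_le (hcopy i) hx))
      (.exists fun i => measurable_const.and <|
        measurableSet_setOfPred.mp (measurableSet_le hx (hcopy i)))

theorem modHalfRegionDepth_eq_integral
    [MeasurableSpace C(unitI, ℝ)] [OpensMeasurableSpace C(unitI, ℝ)]
    (μ : Measure C(unitI, ℝ)) [IsProbabilityMeasure μ] (x : C(unitI, ℝ)) :
    modHalfRegionDepth μ x = min (∫ t : unitI, (μ {z | z t ≤ x t}).toReal)
        (∫ t : unitI, (μ {z | x t ≤ z t}).toReal) := by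
  have heval : Measurable fun p : C(unitI, ℝ) × unitI => p.1 p.2 :=
    measurable_continuousMap_apply_prod measurable_id
  have hx : Measurable fun p : C(unitI, ℝ) × unitI => x p.2 :=
    x.continuous.measurable.comp measurable_snd
  rw [modHalfRegionDepth,
    integral_measure_setOf_toReal_comm (P := fun z t => z t ≤ x t) μ volume
      (measurableSet_le heval hx),
    integral_measure_setOf_toReal_comm (P := fun z t => x t ≤ z t) μ volume
      (measurableSet_le hx heval)]

theorem modBandDepth_and_modHalfRegionDepth_repr_general
    [MeasurableSpace C(unitI, ℝ)] [BorelSpace C(unitI, ℝ)]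
    (J : ℕ)
    (μ : Measure C(unitI, ℝ)) [IsProbabilityMeasure μ] (x : C(unitI, ℝ)) :
    (modBandDepth μ J x = ∑ j ∈ Finset.Icc 2 J, ∫ t : unitI,
        (1 - (μ {z | z t < x t}).toReal ^ j - (μ {z | x t < z t}).toReal ^ j)) ∧
    (modHalfRegionDepth μ x = min (∫ t : unitI, (μ {z | z t ≤ x t}).toReal)
        (∫ t : unitI, (μ {z | x t ≤ z t}).toReal)) :=
  ⟨modBandDepth_eq_integral J μ x, modHalfRegionDepth_eq_integral μ x⟩

/-- The Fubini representations (3.3) and (3.4): for a random element `X` of `C[0,1]` with law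
`μ`, `MBD(x) = ∑_{j=2}^J ∫_0^1 [1 − P(X_t < x_t)^j − P(X_t > x_t)^j] dt` and
`MHRD(x) = min{ ∫_0^1 P(X_t ≤ x_t) dt, ∫_0^1 P(X_t ≥ x_t) dt }`. -/
theorem modBandDepth_and_modHalfRegionDepth_repr
    [MeasurableSpace C(unitI, ℝ)] [BorelSpace C(unitI, ℝ)]
    (J : ℕ) (hJ : 2 ≤ J)
    (μ : Measure C(unitI, ℝ)) [IsProbabilityMeasure μ] (x : C(unitI, ℝ)) :
    (modBandDepth μ J x = ∑ j ∈ Finset.Icc 2 J, ∫ t : unitI,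
        (1 - (μ {z | z t < x t}).toReal ^ j - (μ {z | x t < z t}).toReal ^ j)) ∧
    (modHalfRegionDepth μ x = min (∫ t : unitI, (μ {z | z t ≤ x t}).toReal)
        (∫ t : unitI, (μ {z | x t ≤ z t}).toReal)) :=
  modBandDepth_and_modHalfRegionDepth_repr_general J μ x
end

section
/- Fix an integer J ≥ 2. Let X = {X_t}_{t∈[0,1]} be a random element of C[0,1] that is symmetrically distributed about a = {a_t}_{t∈[0,1]} ∈ C[0,1], i.e., X − a and a − X have the same distribution. Assume moreover that for each t ∈ [0,1] the distribution function of X_t is continuous and a_t is the unique median of X_t. Then MBD has a unique maximum at a: MBD(x) < MBD(a) for every x ∈ C[0,1] with x ≠ a. -/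
set_option synthInstance.maxHeartbeats 400000

open MeasureTheory ENNReal

/-!
By Tonelli, the `j`-th summand of `MBD(x)` is `∫ P(x_t lies between the min and the max of
X_{1,t}, …, X_{j,t}) dt`, and since `X_t` has a continuous distribution function `F_t`, this
probability is `1 - (1 - F_t(x_t))^j - F_t(x_t)^j`. By strict convexity of `p ↦ p^j` it is
largest exactly when `F_t(x_t) = 1/2`. Symmetry about `a` gives `F_t(a_t) = 1/2`, and as `a_t`
is the only median of `X_t`, the inequality is strict on the open set `{t | x_t ≠ a_t}`, which is
nonempty, hence of positive Lebesgue measure.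
-/

open Finset

section RealValuedLaws

variable {ι α : Type*} [Fintype ι] [MeasurableSpace α] {μ : Measure α}

lemma measureReal_pi_setOf_forall_imp_mem [IsProbabilityMeasure μ] (p : ι → Prop)
    [DecidablePred p] (B : Set α) :
    (Measure.pi fun _ : ι => μ).real {ω | ∀ i, p i → ω i ∈ B} = μ.real B ^ #{i | p i} := by
  have hpi : {ω : ι → α | ∀ i, p i → ω i ∈ B} =
      (({i | p i} : Finset ι) : Set ι).pi fun _ => B := by
    ext; simp
  rw [measureReal_def, hpi, Measure.pi_pi_finset, prod_const, toReal_pow, measureReal_def]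

variable {g : α → ℝ} {c : ℝ}

lemma measureReal_setOf_lt_eq (hc : μ {a | g a = c} = 0) :
    μ.real {a | g a < c} = μ.real {a | g a ≤ c} := by
  have hset : {a | g a < c} = {a | g a ≤ c} \ {a | g a = c} := by
    ext; simp [lt_iff_le_and_ne]
  rw [hset, measureReal_def, measureReal_def, measure_sdiff_null hc]

lemma measureReal_setOf_gt_eq [IsProbabilityMeasure μ] (hg : Measurable g) :
    μ.real {a | c < g a} = 1 - μ.real {a | g a ≤ c} := by
  have hset : {a | c < g a} = {a | g a ≤ c}ᶜ := by ext; simp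
  rw [hset, probReal_compl_eq_one_sub (s := {a | g a ≤ c}) (hg measurableSet_Iic)]

lemma measureReal_setOf_ge_eq [IsProbabilityMeasure μ] (hg : Measurable g)
    (hc : μ {a | g a = c} = 0) :
    μ.real {a | c ≤ g a} = 1 - μ.real {a | g a ≤ c} := by
  have hset : {a | c ≤ g a} = {a | g a < c}ᶜ := by ext; simp
  rw [hset, probReal_compl_eq_one_sub (s := {a | g a < c}) (hg measurableSet_Iio),
    measureReal_setOf_lt_eq hc]

lemma measureReal_pi_exists_le_and_exists_ge [IsProbabilityMeasure μ] (hg : Measurable g)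
    (hc : μ {a | g a = c} = 0) {p : ι → Prop} [DecidablePred p] (hp : ∃ i, p i) :
    (Measure.pi fun _ : ι => μ).real {ω | (∃ i, p i ∧ g (ω i) ≤ c) ∧ (∃ i, p i ∧ c ≤ g (ω i))} =
      1 - (1 - μ.real {a | g a ≤ c}) ^ #{i | p i} - μ.real {a | g a ≤ c} ^ #{i | p i} := by
  set above := {ω : ι → α | ∀ i, p i → ω i ∈ {a | c < g a}}
  set below := {ω : ι → α | ∀ i, p i → ω i ∈ {a | g a < c}}
  have hband : {ω | (∃ i, p i ∧ g (ω i) ≤ c) ∧ (∃ i, p i ∧ c ≤ g (ω i))} = (above ∪ below)ᶜ := by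
    ext ω; simp [above, below, not_lt, and_comm]
  have hdisj : Disjoint above below := by
    obtain ⟨i, hi⟩ := hp
    exact Set.disjoint_left.2 fun ω (ha : ∀ i, p i → c < g (ω i)) (hb : ∀ i, p i → g (ω i) < c) =>
      (ha i hi).not_gt (hb i hi)
  have hbelow : MeasurableSet below := .pi (Set.to_countable _) fun _ _ => hg measurableSet_Iio
  have habove : MeasurableSet above := .pi (Set.to_countable _) fun _ _ => hg measurableSet_Ioi
  rw [hband, probReal_compl_eq_one_sub (habove.union hbelow), measureReal_union hdisj hbelow,
    measureReal_pi_setOf_forall_imp_mem, measureReal_pi_setOf_forall_imp_mem,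
    measureReal_setOf_gt_eq hg, measureReal_setOf_lt_eq hc]
  ring

lemma measureReal_setOf_le_eq_half [IsProbabilityMeasure μ] (hg : Measurable g)
    (hc : μ {a | g a = c} = 0) (hsymm : μ {a | g a ≤ c} = μ {a | c ≤ g a}) :
    μ.real {a | g a ≤ c} = 2⁻¹ := by
  have h : μ.real {a | g a ≤ c} = μ.real {a | c ≤ g a} := by
    rw [measureReal_def, hsymm, measureReal_def]
  rw [measureReal_setOf_ge_eq hg hc] at h
  linarith

lemma measure_setOf_le_eq_half_and_ge_eq_half [IsProbabilityMeasure μ] (hg : Measurable g)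
    (hc : μ {a | g a = c} = 0) (h : μ.real {a | g a ≤ c} = 2⁻¹) :
    μ {a | g a ≤ c} = 2⁻¹ ∧ μ {a | c ≤ g a} = 2⁻¹ := by
  rw [← ofReal_measureReal, ← ofReal_measureReal, measureReal_setOf_ge_eq hg hc, h,
    show (1 : ℝ) - 2⁻¹ = 2⁻¹ by norm_num, ENNReal.ofReal_inv_of_pos two_pos, ofReal_ofNat]
  exact ⟨rfl, rfl⟩

end RealValuedLaws

lemma two_mul_inv_two_pow_lt_one_sub_pow_add_pow {j : ℕ} (hj : 2 ≤ j) {p : ℝ} (hp₀ : 0 ≤ p)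
    (hp₁ : p ≤ 1) (hp : p ≠ 2⁻¹) : 2 * 2⁻¹ ^ j < (1 - p) ^ j + p ^ j := by
  have := (strictConvexOn_pow hj).2 (Set.mem_Ici.2 (sub_nonneg.2 hp₁)) (Set.mem_Ici.2 hp₀)
    (by contrapose! hp; linarith) (by norm_num : (0 : ℝ) < 2⁻¹) (by norm_num : (0 : ℝ) < 2⁻¹)
    (by norm_num)
  have hmid : (2⁻¹ : ℝ) • (1 - p) + (2⁻¹ : ℝ) • p = 2⁻¹ := by simp only [smul_eq_mul]; ring
  rw [hmid] at this
  simp only [smul_eq_mul] at this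
  linarith

instance : (volume : Measure unitI).IsOpenPosMeasure where
  open_pos U hU := by
    rintro ⟨t, htU⟩
    obtain ⟨V, hV, rfl⟩ := isOpen_induced_iff.1 hU
    have ht : (t : ℝ) ∈ closure (Set.Ioo (0 : ℝ) 1) := by
      rw [closure_Ioo zero_ne_one]; exact t.2
    obtain ⟨s, hsV, hs⟩ := mem_closure_iff.1 ht V hV htU
    rw [unitInterval.volume_apply, Subtype.image_preimage_coe]
    refine (((hV.inter isOpen_Ioo).measure_pos volume ⟨s, hsV, hs⟩).trans_le (measure_mono ?_)).ne'
    exact fun u hu => ⟨Set.Ioo_subset_Icc_self hu.2, hu.1⟩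

lemma integral_toReal_measure_prodMk_left {α β : Type*} [MeasurableSpace α] [MeasurableSpace β]
    {μ : Measure α} {ν : Measure β} [SFinite μ] [IsFiniteMeasure ν] {s : Set (α × β)}
    (hs : MeasurableSet s) :
    ∫ a, (ν (Prod.mk a ⁻¹' s)).toReal ∂μ = (∫⁻ b, μ ((·, b) ⁻¹' s) ∂ν).toReal := by
  rw [integral_toReal (measurable_measure_prodMk_left hs).aemeasurable
    (ae_of_all _ fun _ => measure_lt_top _ _), ← Measure.prod_apply hs, Measure.prod_apply_symm hs]

section BandDepth

variable [MeasurableSpace C(unitI, ℝ)]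

noncomputable def bandProb (μ : Measure C(unitI, ℝ)) [SigmaFinite μ] (J j : ℕ) (t : unitI)
    (c : ℝ) : ℝ≥0∞ :=
  Measure.pi (fun _ : Fin J => μ)
    {ω | (∃ i : Fin J, (i : ℕ) < j ∧ ω i t ≤ c) ∧ (∃ i : Fin J, (i : ℕ) < j ∧ c ≤ ω i t)}

lemma measurableSet_band [BorelSpace C(unitI, ℝ)] (J j : ℕ) (y : C(unitI, ℝ)) :
    MeasurableSet {q : (Fin J → C(unitI, ℝ)) × unitI |
      (∃ i : Fin J, (i : ℕ) < j ∧ q.1 i q.2 ≤ y q.2) ∧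
      (∃ i : Fin J, (i : ℕ) < j ∧ y q.2 ≤ q.1 i q.2)} := by
  measurability

lemma modBandDepth_eq_sum_lintegral [BorelSpace C(unitI, ℝ)] (μ : Measure C(unitI, ℝ))
    [SigmaFinite μ] (J : ℕ) (y : C(unitI, ℝ)) :
    modBandDepth μ J y = ∑ j ∈ Icc 2 J, (∫⁻ t, bandProb μ J j t (y t)).toReal :=
  sum_congr rfl fun j _ => integral_toReal_measure_prodMk_left (measurableSet_band J j y)

variable {μ : Measure C(unitI, ℝ)} {J j : ℕ}

lemma measurable_bandProb [BorelSpace C(unitI, ℝ)] [SigmaFinite μ] (y : C(unitI, ℝ)) :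
    Measurable fun t => bandProb μ J j t (y t) :=
  measurable_measure_prodMk_right (measurableSet_band J j y)

lemma lintegral_bandProb_ne_top [IsProbabilityMeasure μ] (y : C(unitI, ℝ)) :
    ∫⁻ t, bandProb μ J j t (y t) ≠ ∞ :=
  ((lintegral_mono fun _ => prob_le_one).trans_lt (by simp)).ne

lemma toReal_bandProb [BorelSpace C(unitI, ℝ)] [IsProbabilityMeasure μ] (hj : 1 ≤ j)
    (hjJ : j ≤ J) {t : unitI} {c : ℝ} (hc : μ {z | z t = c} = 0) :
    (bandProb μ J j t c).toReal =
      1 - (1 - μ.real {z | z t ≤ c}) ^ j - μ.real {z | z t ≤ c} ^ j := by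
  have h := measureReal_pi_exists_le_and_exists_ge (ι := Fin J) (p := fun i => (i : ℕ) < j)
    (continuous_eval_const t).measurable hc ⟨⟨0, by omega⟩, by simp; omega⟩
  rwa [Fin.card_filter_val_lt, min_eq_right hjJ] at h

lemma bandProb_lt_of_measureReal_ne_half [BorelSpace C(unitI, ℝ)] [IsProbabilityMeasure μ]
    (hj : 2 ≤ j) (hjJ : j ≤ J) {t : unitI} {c c₀ : ℝ}
    (hc : μ {z | z t = c} = 0) (hc₀ : μ {z | z t = c₀} = 0)
    (hc₀_half : μ.real {z | z t ≤ c₀} = 2⁻¹) (hc_half : μ.real {z | z t ≤ c} ≠ 2⁻¹) :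
    bandProb μ J j t c < bandProb μ J j t c₀ := by
  have hfin (c' : ℝ) : bandProb μ J j t c' ≠ ∞ := measure_ne_top _ _
  rw [← ENNReal.toReal_lt_toReal (hfin c) (hfin c₀), toReal_bandProb (by omega) hjJ hc,
    toReal_bandProb (by omega) hjJ hc₀, hc₀_half]
  have h := two_mul_inv_two_pow_lt_one_sub_pow_add_pow hj measureReal_nonneg measureReal_le_one
    hc_half
  norm_num at h ⊢
  linarith

lemma measure_eval_le_eq_measure_eval_ge [BorelSpace C(unitI, ℝ)] {a : C(unitI, ℝ)}
    (hsym : μ.map (fun z => z - a) = μ.map (fun z => a - z)) (t : unitI) :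
    μ {z | z t ≤ a t} = μ {z | a t ≤ z t} := by
  have hS : MeasurableSet {w : C(unitI, ℝ) | w t ≤ 0} :=
    measurableSet_le (continuous_eval_const t).measurable measurable_const
  have h := congrArg (· {w : C(unitI, ℝ) | w t ≤ 0}) hsym
  rw [Measure.map_apply (by fun_prop) hS, Measure.map_apply (by fun_prop) hS] at h
  simpa [sub_nonpos] using h

end BandDepth

/-- If a random element `X` of `C[0,1]` with law `μ` is symmetrically distributed about
`a ∈ C[0,1]` (i.e. `X − a` and `a − X` have the same distribution), each `X_t` has a
continuous distribution function, and `a_t` is the unique median of `X_t` for each `t`,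
then the modified band depth has a unique maximum at `a`. -/
theorem modBandDepth_unique_max
    [MeasurableSpace C(unitI, ℝ)] [BorelSpace C(unitI, ℝ)]
    (J : ℕ) (hJ : 2 ≤ J)
    (μ : Measure C(unitI, ℝ)) [IsProbabilityMeasure μ]
    (a : C(unitI, ℝ))
    (hsym : μ.map (fun z => z - a) = μ.map (fun z => a - z))
    (hcont : ∀ (t : unitI) (c : ℝ), μ {z | z t = c} = 0)
    (hmed : ∀ (t : unitI) (m : ℝ),
      2⁻¹ ≤ μ {z | z t ≤ m} → 2⁻¹ ≤ μ {z | m ≤ z t} → m = a t) :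
    ∀ x : C(unitI, ℝ), x ≠ a → modBandDepth μ J x < modBandDepth μ J a := by
  intro x hx
  have heval (t : unitI) : Measurable fun z : C(unitI, ℝ) => z t :=
    (continuous_eval_const t).measurable
  have hmedian (t : unitI) : μ.real {z | z t ≤ a t} = 2⁻¹ :=
    measureReal_setOf_le_eq_half (heval t) (hcont t _) (measure_eval_le_eq_measure_eval_ge hsym t)
  have hlt {j : ℕ} (hj : 2 ≤ j) (hjJ : j ≤ J) (t : unitI) (ht : x t ≠ a t) :
      bandProb μ J j t (x t) < bandProb μ J j t (a t) := by
    refine bandProb_lt_of_measureReal_ne_half hj hjJ (hcont t _) (hcont t _) (hmedian t) fun h => ?_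
    have hhalf := measure_setOf_le_eq_half_and_ge_eq_half (heval t) (hcont t _) h
    exact ht (hmed t _ hhalf.1.ge hhalf.2.ge)
  have hle {j : ℕ} (hj : 2 ≤ j) (hjJ : j ≤ J) (t : unitI) :
      bandProb μ J j t (x t) ≤ bandProb μ J j t (a t) := by
    by_cases ht : x t = a t
    · rw [ht]
    · exact (hlt hj hjJ t ht).le
  have hxa : volume {t | x t ≠ a t} ≠ 0 :=
    (isOpen_ne_fun x.continuous a.continuous).measure_ne_zero volume (DFunLike.ne_iff.1 hx)
  rw [modBandDepth_eq_sum_lintegral, modBandDepth_eq_sum_lintegral]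
  refine sum_lt_sum_of_nonempty ⟨2, mem_Icc.2 ⟨le_rfl, hJ⟩⟩ fun j hj => ?_
  obtain ⟨hj2, hjJ⟩ := mem_Icc.1 hj
  exact ENNReal.toReal_strict_mono (lintegral_bandProb_ne_top a) <|
    lintegral_strict_mono_of_ae_le_of_ae_lt_on (measurable_bandProb a).aemeasurable
      (lintegral_bandProb_ne_top x) (ae_of_all _ (hle hj2 hjJ)) hxa
      (ae_of_all _ (hlt hj2 hjJ))
end

section
/- Let H be a real separable Hilbert space and let X be a random element of H whose law is non-atomic. Then the spatial depth SD(x) = 1 − ‖E[(x − X)/‖x − X‖]‖ is a continuous function of x on H. -/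
open MeasureTheory

/-- The spatial depth of `x` with respect to the law `μ` of a random element `X` of a real
Hilbert space `H`: `SD(x) = 1 − ‖E[(x − X)/‖x − X‖]‖` (Bochner integral; the integrand is `0`
on the event `X = x`, which is automatic here since `0⁻¹ = 0` in Lean). -/
noncomputable def spatialDepth {H : Type*} [NormedAddCommGroup H] [InnerProductSpace ℝ H]
    [MeasurableSpace H] (μ : Measure H) (x : H) : ℝ :=
  1 - ‖∫ z, ‖x - z‖⁻¹ • (x - z) ∂μ‖

/-- If `X` is a random element of a real separable Hilbert space `H` whose law `μ` is
non-atomic, then the spatial depth `SD` is a continuous function on `H`. -/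
theorem spatialDepth_continuous {H : Type*}
    [NormedAddCommGroup H] [InnerProductSpace ℝ H] [CompleteSpace H]
    [TopologicalSpace.SeparableSpace H] [MeasurableSpace H] [BorelSpace H]
    (μ : Measure H) [IsProbabilityMeasure μ]
    (hna : ∀ x : H, μ {x} = 0) :
    Continuous fun x : H => spatialDepth μ x := by
  haveI : SecondCountableTopology H := UniformSpace.secondCountable_of_separable H
  have hcont : Continuous fun x : H => ∫ z, ‖x - z‖⁻¹ • (x - z) ∂μ := by
    rw [continuous_iff_continuousAt]
    intro x₀
    apply continuousAt_of_dominated (bound := fun _ => (1 : ℝ))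
    · filter_upwards with x
      exact (((measurable_const.sub measurable_id).norm.inv).smul
        (measurable_const.sub measurable_id)).aestronglyMeasurable
    · filter_upwards with x
      filter_upwards with z
      rw [norm_smul, norm_inv, norm_norm]
      rcases eq_or_ne (‖x - z‖) 0 with h | h
      · simp [h]
      · rw [inv_mul_cancel₀ h]
    · exact integrable_const 1
    · have : ∀ᵐ z ∂μ, z ≠ x₀ := by
        rw [ae_iff]
        simpa using hna x₀
      filter_upwards [this] with z hz
      have hnorm : ‖x₀ - z‖ ≠ 0 := by
        simpa [sub_eq_zero] using (Ne.symm hz)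
      exact (((continuous_id.sub continuous_const).norm.continuousAt).inv₀ hnorm).smul
        ((continuous_id.sub continuous_const).continuousAt)
  unfold spatialDepth
  exact continuous_const.sub hcont.norm
end

section
/- Let H be a real separable Hilbert space and let X be a random element of H with a non-atomic law. Let m ∈ H and let x ∈ H be nonzero. Then SD(m + n x) → 0 as n → ∞. -/
open MeasureTheory

open Filter Topology in
lemma unit_smul_pos_aux {H : Type*} [NormedAddCommGroup H] [InnerProductSpace ℝ H]
    {c : ℝ} (hc : 0 < c) (w : H) :
    ‖c • w‖⁻¹ • (c • w) = ‖w‖⁻¹ • w := by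
  rcases eq_or_ne w 0 with rfl | hw
  · simp
  · rw [smul_smul, norm_smul, Real.norm_of_nonneg hc.le, mul_inv,
      mul_comm c⁻¹, mul_assoc, inv_mul_cancel₀ hc.ne', mul_one]

open Filter Topology in
lemma pointwise_ray_aux {H : Type*} [NormedAddCommGroup H] [InnerProductSpace ℝ H]
    (m z : H) {x : H} (hx : x ≠ 0) :
    Tendsto (fun n : ℕ => ‖(m + (n : ℝ) • x) - z‖⁻¹ • ((m + (n : ℝ) • x) - z))
      atTop (𝓝 (‖x‖⁻¹ • x)) := by
  have hcont : ContinuousAt (fun w : H => ‖w‖⁻¹ • w) x :=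
    (continuous_norm.continuousAt.inv₀ (norm_ne_zero_iff.mpr hx)).smul continuousAt_id
  have hu : Tendsto (fun n : ℕ => ((n : ℝ))⁻¹ • (m - z) + x) atTop (𝓝 x) := by
    have h0 : Tendsto (fun n : ℕ => ((n : ℝ))⁻¹ • (m - z)) atTop (𝓝 (0 : H)) := by
      simpa using
        (tendsto_inv_atTop_zero.comp
          (tendsto_natCast_atTop_atTop (R := ℝ))).smul_const (m - z)
    simpa using h0.add_const x
  have hcomp := hcont.tendsto.comp hu
  refine hcomp.congr' ?_
  filter_upwards [Filter.eventually_ge_atTop 1] with n hn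
  have hn' : (0 : ℝ) < n := by exact_mod_cast hn
  have hw : ((n : ℝ))⁻¹ • ((m + (n : ℝ) • x) - z) = ((n : ℝ))⁻¹ • (m - z) + x := by
    rw [smul_sub, smul_add, smul_smul, inv_mul_cancel₀ hn'.ne', one_smul, smul_sub]
    abel
  simp only [Function.comp]
  rw [← hw, unit_smul_pos_aux (inv_pos.mpr hn')]

/-- If `X` is a random element of a real separable Hilbert space `H` with non-atomic law `μ`,
then for any `m ∈ H` and any nonzero `x ∈ H`, `SD(m + n·x) → 0` as `n → ∞`. -/
theorem spatialDepth_tendsto_zero_along_rays {H : Type*}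
    [NormedAddCommGroup H] [InnerProductSpace ℝ H] [CompleteSpace H]
    [TopologicalSpace.SeparableSpace H] [MeasurableSpace H] [BorelSpace H]
    (μ : Measure H) [IsProbabilityMeasure μ]
    (hna : ∀ x : H, μ {x} = 0)
    (m : H) (x : H) (hx : x ≠ 0) :
    Filter.Tendsto (fun n : ℕ => spatialDepth μ (m + (n : ℝ) • x))
      Filter.atTop (nhds 0) := by
  open Filter Topology in
  set x' : H := ‖x‖⁻¹ • x with hx'
  have hnorm : ‖x'‖ = 1 := by
    rw [hx', norm_smul, norm_inv, norm_norm, inv_mul_cancel₀ (norm_ne_zero_iff.mpr hx)]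
  have hint : Filter.Tendsto
      (fun n : ℕ => ∫ z, ‖(m + (n : ℝ) • x) - z‖⁻¹ • ((m + (n : ℝ) • x) - z) ∂μ)
      Filter.atTop (nhds (∫ _z, x' ∂μ)) := by
    apply tendsto_integral_of_dominated_convergence (fun _ => (1 : ℝ))
    · intro n
      apply Measurable.aestronglyMeasurable
      have h1 : Measurable fun z : H => (m + (n : ℝ) • x) - z :=
        measurable_const.sub measurable_id
      exact h1.norm.inv.smul h1
    · exact integrable_const 1
    · intro n
      filter_upwards with z
      rcases eq_or_ne ((m + (n : ℝ) • x) - z) 0 with h | h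
      · simp [h]
      · rw [norm_smul, norm_inv, norm_norm, inv_mul_cancel₀ (norm_ne_zero_iff.mpr h)]
    · filter_upwards with z
      exact pointwise_ray_aux m z hx
  have hci : (∫ _z, x' ∂μ) = x' := by simp
  rw [hci] at hint
  have h2 : Filter.Tendsto (fun n : ℕ => spatialDepth μ (m + (n : ℝ) • x))
      Filter.atTop (nhds (1 - ‖x'‖)) := tendsto_const_nhds.sub hint.norm
  simpa [hnorm] using h2
end

section
/- Let g : [0,1] × ℝ → ℝ be continuous with g(t,·) strictly increasing for each t ∈ [0,1], let y_0 ∈ ℝ, and let C_{y_0}[0,1] = { f ∈ C[0,1] : f_0 = y_0 }. Define G(f) = {g(t, f_t)}_{t∈[0,1]} for f = {f_t}_{t∈[0,1]} ∈ C[0,1]. Then the set H_0 = G(C_{y_0}[0,1]) = { G(f) : f ∈ C_{y_0}[0,1] } is a convex subset of C[0,1]. -/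
/-- Lemma 6.2: for continuous `g : [0,1] × ℝ → ℝ` with `g(t,·)` strictly increasing for each
`t`, the image `H₀ = G(C_{y₀}[0,1])` of `C_{y₀}[0,1] = {f ∈ C[0,1] : f(0) = y₀}` under the
superposition map `G(f) = {g(t, f(t))}_t` is a convex subset of `C[0,1]`. -/
theorem superposition_image_convex (g : unitI → ℝ → ℝ)
    (hg : Continuous fun q : unitI × ℝ => g q.1 q.2)
    (hgm : ∀ t : unitI, StrictMono (g t)) (y0 : ℝ) :
    Convex ℝ {h : C(unitI, ℝ) | ∃ f : C(unitI, ℝ),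
      f ⟨0, Set.left_mem_Icc.mpr zero_le_one⟩ = y0 ∧ ∀ t : unitI, h t = g t (f t)} := by
  intro h1 hh1 h2 hh2 a b ha hb hab
  obtain ⟨f1, hf10, hf1⟩ := hh1
  obtain ⟨f2, hf20, hf2⟩ := hh2
  -- the target function
  set v : unitI → ℝ := fun t => a * g t (f1 t) + b * g t (f2 t) with hv
  have hvc : Continuous v := by
    have c1 : Continuous fun t : unitI => g t (f1 t) :=
      hg.comp (continuous_id.prodMk f1.continuous)
    have c2 : Continuous fun t : unitI => g t (f2 t) :=
      hg.comp (continuous_id.prodMk f2.continuous)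
    exact (continuous_const.mul c1).add (continuous_const.mul c2)
  -- existence of a pointwise preimage via the IVT
  have key : ∀ A B : ℝ, A ≤ B → A ≤ a * A + b * B ∧ a * A + b * B ≤ B := by
    intro A B hAB
    have e1 : a * A + b * A = A := by linear_combination A * hab
    have e2 : a * B + b * B = B := by linear_combination B * hab
    have m1 := mul_le_mul_of_nonneg_left hAB hb
    have m2 := mul_le_mul_of_nonneg_left hAB ha
    constructor <;> linarith
  have key2 : ∀ A B : ℝ, B ≤ A → B ≤ a * A + b * B ∧ a * A + b * B ≤ A := by
    intro A B hBA
    have e1 : a * A + b * A = A := by linear_combination A * hab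
    have e2 : a * B + b * B = B := by linear_combination B * hab
    have m1 := mul_le_mul_of_nonneg_left hBA hb
    have m2 := mul_le_mul_of_nonneg_left hBA ha
    constructor <;> linarith
  have hex : ∀ t : unitI, ∃ x, g t x = v t := by
    intro t
    have hv' : v t = a * g t (f1 t) + b * g t (f2 t) := rfl
    have hmem : v t ∈ Set.uIcc (g t (f1 t)) (g t (f2 t)) := by
      rw [Set.mem_uIcc, hv']
      rcases le_total (g t (f1 t)) (g t (f2 t)) with hle | hle
      · exact Or.inl (key _ _ hle)
      · exact Or.inr (key2 _ _ hle)
    have cgt : Continuous (g t) :=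
      hg.comp (Continuous.prodMk continuous_const continuous_id)
    have := intermediate_value_uIcc (a := f1 t) (b := f2 t) cgt.continuousOn
    obtain ⟨x, -, hx⟩ := this hmem
    exact ⟨x, hx⟩
  set f : unitI → ℝ := fun t => (hex t).choose with hf
  have hspec : ∀ t, g t (f t) = v t := fun t => (hex t).choose_spec
  -- continuity of f
  have hfc : Continuous f := by
    rw [continuous_iff_continuousAt]
    intro t0
    rw [ContinuousAt, Metric.tendsto_nhds]
    intro ε hε
    set x0 := f t0 with hx0
    have hlow : g t0 (x0 - ε) < v t0 := by
      rw [← hspec t0]; exact hgm t0 (by linarith)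
    have hhigh : v t0 < g t0 (x0 + ε) := by
      rw [← hspec t0]; exact hgm t0 (by linarith)
    have c1 : Continuous fun t : unitI => g t (x0 - ε) :=
      hg.comp (continuous_id.prodMk continuous_const)
    have c2 : Continuous fun t : unitI => g t (x0 + ε) :=
      hg.comp (continuous_id.prodMk continuous_const)
    have hopen : IsOpen {t : unitI | g t (x0 - ε) < v t ∧ v t < g t (x0 + ε)} :=
      (isOpen_lt c1 hvc).inter (isOpen_lt hvc c2)
    have hmem : t0 ∈ {t : unitI | g t (x0 - ε) < v t ∧ v t < g t (x0 + ε)} :=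
      ⟨hlow, hhigh⟩
    filter_upwards [hopen.mem_nhds hmem] with t ht
    obtain ⟨ht1, ht2⟩ := ht
    rw [← hspec t] at ht1 ht2
    have l1 : x0 - ε < f t := ((hgm t).lt_iff_lt).mp ht1
    have l2 : f t < x0 + ε := ((hgm t).lt_iff_lt).mp ht2
    rw [Real.dist_eq, abs_lt]
    constructor <;> linarith
  refine ⟨⟨f, hfc⟩, ?_, ?_⟩
  · -- value at 0
    set z : unitI := ⟨0, Set.left_mem_Icc.mpr zero_le_one⟩
    apply (hgm z).injective
    simp only [ContinuousMap.coe_mk]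
    rw [hspec z]
    show a * g z (f1 z) + b * g z (f2 z) = g z y0
    rw [hf10, hf20]
    linear_combination g z y0 * hab
  · intro t
    simp only [ContinuousMap.add_apply, ContinuousMap.smul_apply, smul_eq_mul,
      ContinuousMap.coe_mk]
    rw [hspec t, hv, hf1 t, hf2 t]
end
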